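/- arXiv:1108.2795 — 6 statements merged into one kernel-verified Lean document; each statement's English description precedes it below -/
import Mathlib

section
/- For every Orlicz function Φ, the limit p_Φ = lim_{t→0⁺} log M(t,Φ)/log t and the limit q_Φ = lim_{t→∞} log M(t,Φ)/log t both exist as values in [1,∞], and they satisfy 1 ≤ p_Φ ≤ q_Φ ≤ ∞. -/
open MeasureTheory Filter Set
open scoped ENNReal Topology

/-- An Orlicz function: continuous, nondecreasing and convex on `[0,∞)`,
vanishing at `0` and tending to `∞` at `∞`. -/
structure IsOrliczFunction (Φ : ℝ → ℝ) : Prop where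
  continuousOn : ContinuousOn Φ (Set.Ici 0)
  monotoneOn : MonotoneOn Φ (Set.Ici 0)
  convexOn : ConvexOn ℝ (Set.Ici 0) Φ
  map_zero : Φ 0 = 0
  tendsto_atTop : Tendsto Φ atTop atTop

/-- `M(t, Φ) = sup {Φ(ts)/Φ(s) : s > 0, Φ(s) > 0}`, as a value in `(0, ∞]`. -/
noncomputable def orliczM (Φ : ℝ → ℝ) (t : ℝ) : ℝ≥0∞ :=
  ⨆ s ∈ {s : ℝ | 0 < s ∧ 0 < Φ s}, ENNReal.ofReal (Φ (t * s) / Φ s)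

/-- The quantity `log M(t, Φ) / log t`, as an extended real number.
The index `p_Φ` is its limit as `t → 0⁺`, and `q_Φ` is its limit as `t → ∞`. -/
noncomputable def orliczLogRatio (Φ : ℝ → ℝ) (t : ℝ) : EReal :=
  ENNReal.log (orliczM Φ t) * ((Real.log t)⁻¹ : ℝ)

namespace OrliczAux

variable {Φ : ℝ → ℝ}

lemma nonneg (hΦ : IsOrliczFunction Φ) {s : ℝ} (hs : 0 ≤ s) : 0 ≤ Φ s := by
  have := hΦ.monotoneOn (mem_Ici.2 le_rfl) (mem_Ici.2 hs) hs
  simpa [hΦ.map_zero] using this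

lemma exists_pos (hΦ : IsOrliczFunction Φ) : ∃ s₀ : ℝ, 0 < s₀ ∧ 0 < Φ s₀ := by
  obtain ⟨s₀, h1, h2⟩ :=
    ((hΦ.tendsto_atTop.eventually_ge_atTop 1).and (eventually_ge_atTop 1)).exists
  exact ⟨s₀, lt_of_lt_of_le one_pos h2, lt_of_lt_of_le one_pos h1⟩

lemma phi_smul_le (hΦ : IsOrliczFunction Φ) {t s : ℝ} (ht0 : 0 ≤ t) (ht1 : t ≤ 1)
    (hs : 0 ≤ s) : Φ (t * s) ≤ t * Φ s := by
  have := hΦ.convexOn.2 (mem_Ici.2 hs) (mem_Ici.2 (le_refl (0:ℝ))) ht0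
    (by linarith : (0:ℝ) ≤ 1 - t) (by ring)
  simpa [hΦ.map_zero] using this

lemma le_phi_smul (hΦ : IsOrliczFunction Φ) {t s : ℝ} (ht : 1 ≤ t) (hs : 0 ≤ s) :
    t * Φ s ≤ Φ (t * s) := by
  have h0 : (0:ℝ) < t := lt_of_lt_of_le one_pos ht
  have h := phi_smul_le hΦ (t := t⁻¹) (s := t * s) (by positivity)
    (inv_le_one_of_one_le₀ ht) (by positivity)
  rw [inv_mul_cancel_left₀ h0.ne'] at h
  calc t * Φ s ≤ t * (t⁻¹ * Φ (t * s)) := by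
        exact mul_le_mul_of_nonneg_left h h0.le
    _ = Φ (t * s) := by field_simp

lemma M_le_ofReal (hΦ : IsOrliczFunction Φ) {t : ℝ} (ht0 : 0 ≤ t) (ht1 : t ≤ 1) :
    orliczM Φ t ≤ ENNReal.ofReal t := by
  refine iSup₂_le fun s hs => ?_
  obtain ⟨hs0, hΦs⟩ := hs
  refine ENNReal.ofReal_le_ofReal ?_
  rw [div_le_iff₀ hΦs]
  exact phi_smul_le hΦ ht0 ht1 hs0.le

lemma ofReal_le_M (hΦ : IsOrliczFunction Φ) {t : ℝ} (ht : 1 ≤ t) :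
    ENNReal.ofReal t ≤ orliczM Φ t := by
  obtain ⟨s₀, hs₀, hΦs₀⟩ := exists_pos hΦ
  refine le_trans ?_ (le_iSup₂ (f := fun s (_ : s ∈ {s : ℝ | 0 < s ∧ 0 < Φ s}) =>
    ENNReal.ofReal (Φ (t * s) / Φ s)) s₀ ⟨hs₀, hΦs₀⟩)
  refine ENNReal.ofReal_le_ofReal ?_
  rw [le_div_iff₀ hΦs₀]
  exact le_phi_smul hΦ ht hs₀.le

lemma M_one (hΦ : IsOrliczFunction Φ) : orliczM Φ 1 = 1 := by
  refine le_antisymm ?_ ?_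
  · simpa using M_le_ofReal hΦ zero_le_one le_rfl
  · simpa using ofReal_le_M hΦ le_rfl

lemma M_pos (hΦ : IsOrliczFunction Φ) {t : ℝ} (ht : 0 < t) : 0 < orliczM Φ t := by
  obtain ⟨s₀, hs₀, hΦs₀⟩ := exists_pos hΦ
  set s := max s₀ (s₀ / t) with hsdef
  have hs0 : 0 < s := lt_of_lt_of_le hs₀ (le_max_left _ _)
  have hΦs : 0 < Φ s :=
    lt_of_lt_of_le hΦs₀ (hΦ.monotoneOn (mem_Ici.2 hs₀.le) (mem_Ici.2 hs0.le) (le_max_left _ _))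
  have hts : s₀ ≤ t * s := by
    have : s₀ / t ≤ s := le_max_right _ _
    rw [div_le_iff₀ ht] at this
    linarith [this]
  have hΦts : 0 < Φ (t * s) :=
    lt_of_lt_of_le hΦs₀ (hΦ.monotoneOn (mem_Ici.2 hs₀.le)
      (mem_Ici.2 (by positivity)) hts)
  have : (0:ℝ≥0∞) < ENNReal.ofReal (Φ (t * s) / Φ s) := by
    rw [ENNReal.ofReal_pos]; positivity
  exact lt_of_lt_of_le this (le_iSup₂ (f := fun s (_ : s ∈ {s : ℝ | 0 < s ∧ 0 < Φ s}) =>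
    ENNReal.ofReal (Φ (t * s) / Φ s)) s ⟨hs0, hΦs⟩)

lemma M_mono (hΦ : IsOrliczFunction Φ) {t₁ t₂ : ℝ} (h0 : 0 ≤ t₁) (h : t₁ ≤ t₂) :
    orliczM Φ t₁ ≤ orliczM Φ t₂ := by
  refine iSup₂_le fun s hs => ?_
  obtain ⟨hs0, hΦs⟩ := hs
  refine le_trans ?_ (le_iSup₂ (f := fun s (_ : s ∈ {s : ℝ | 0 < s ∧ 0 < Φ s}) =>
    ENNReal.ofReal (Φ (t₂ * s) / Φ s)) s ⟨hs0, hΦs⟩)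
  refine ENNReal.ofReal_le_ofReal ?_
  have hmul : Φ (t₁ * s) ≤ Φ (t₂ * s) :=
    hΦ.monotoneOn (mem_Ici.2 (mul_nonneg h0 hs0.le))
      (mem_Ici.2 (mul_nonneg (h0.trans h) hs0.le))
      (mul_le_mul_of_nonneg_right h hs0.le)
  exact div_le_div_of_nonneg_right hmul hΦs.le

lemma M_submul (hΦ : IsOrliczFunction Φ) {t₁ t₂ : ℝ} (h₁ : 0 < t₁) (h₂ : 0 < t₂)
    (h : t₁ ≤ 1 ∨ 1 ≤ t₂) : orliczM Φ (t₁ * t₂) ≤ orliczM Φ t₁ * orliczM Φ t₂ := by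
  refine iSup₂_le fun s hs => ?_
  obtain ⟨hs0, hΦs⟩ := hs
  by_cases hz : 0 < Φ (t₂ * s)
  · have key : Φ (t₁ * t₂ * s) / Φ s
        = (Φ (t₁ * (t₂ * s)) / Φ (t₂ * s)) * (Φ (t₂ * s) / Φ s) := by
      rw [mul_assoc]
      field_simp
    rw [key, ENNReal.ofReal_mul (div_nonneg (nonneg hΦ (by positivity)) hz.le)]
    refine mul_le_mul' ?_ ?_
    · exact le_iSup₂ (f := fun s (_ : s ∈ {s : ℝ | 0 < s ∧ 0 < Φ s}) =>
        ENNReal.ofReal (Φ (t₁ * s) / Φ s)) (t₂ * s) ⟨by positivity, hz⟩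
    · exact le_iSup₂ (f := fun s (_ : s ∈ {s : ℝ | 0 < s ∧ 0 < Φ s}) =>
        ENNReal.ofReal (Φ (t₂ * s) / Φ s)) s ⟨hs0, hΦs⟩
  · have hz0 : Φ (t₂ * s) = 0 := le_antisymm (not_lt.1 hz) (nonneg hΦ (by positivity))
    rcases h with h | h
    · have hle : Φ (t₁ * t₂ * s) ≤ Φ (t₂ * s) := by
        refine hΦ.monotoneOn (mem_Ici.2 (by positivity)) (mem_Ici.2 (by positivity)) ?_
        nlinarith [mul_nonneg (sub_nonneg.2 h) (mul_pos h₂ hs0).le]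
      have : Φ (t₁ * t₂ * s) = 0 :=
        le_antisymm (hz0 ▸ hle) (nonneg hΦ (by positivity))
      simp [this]
    · exfalso
      have : Φ s ≤ Φ (t₂ * s) := by
        refine hΦ.monotoneOn (mem_Ici.2 hs0.le) (mem_Ici.2 (by positivity)) ?_
        nlinarith [mul_nonneg (sub_nonneg.2 h) hs0.le]
      exact hz (lt_of_lt_of_le hΦs this)

lemma M_pow (hΦ : IsOrliczFunction Φ) {t : ℝ} (ht : 0 < t) (n : ℕ) :
    orliczM Φ (t ^ n) ≤ (orliczM Φ t) ^ n := by
  induction n with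
  | zero => simp [M_one hΦ]
  | succ n ih =>
    rw [pow_succ, pow_succ]
    calc orliczM Φ (t ^ n * t) ≤ orliczM Φ (t ^ n) * orliczM Φ t := by
          refine M_submul hΦ (by positivity) ht ?_
          rcases le_total t 1 with h | h
          · exact Or.inl (pow_le_one₀ ht.le h)
          · exact Or.inr h
      _ ≤ _ := mul_le_mul_left ih _

/-- The real-valued log-ratio. -/
noncomputable def G (Φ : ℝ → ℝ) (t : ℝ) : ℝ :=
  Real.log ((orliczM Φ t).toReal) / Real.log t

lemma ratio_eq (hΦ : IsOrliczFunction Φ) {t : ℝ} (ht : 0 < t) (hne : orliczM Φ t ≠ ⊤) :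
    orliczLogRatio Φ t = (G Φ t : EReal) := by
  have h1 : (0:ℝ) < (orliczM Φ t).toReal := ENNReal.toReal_pos (M_pos hΦ ht).ne' hne
  rw [orliczLogRatio, ENNReal.log_pos_real' h1, ← EReal.coe_mul, G, div_eq_mul_inv]


lemma one_le_G_lt_one (hΦ : IsOrliczFunction Φ) {t : ℝ} (h0 : 0 < t) (h1 : t < 1) :
    1 ≤ G Φ t := by
  have hne : orliczM Φ t ≠ ⊤ :=
    (lt_of_le_of_lt (M_le_ofReal hΦ h0.le h1.le) ENNReal.ofReal_lt_top).ne
  have ha0 : (0:ℝ) < (orliczM Φ t).toReal := ENNReal.toReal_pos (M_pos hΦ h0).ne' hne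
  have ha : (orliczM Φ t).toReal ≤ t :=
    ENNReal.toReal_le_of_le_ofReal h0.le (M_le_ofReal hΦ h0.le h1.le)
  have hlt : Real.log t < 0 := Real.log_neg h0 h1
  have hla : Real.log ((orliczM Φ t).toReal) ≤ Real.log t := Real.log_le_log ha0 ha
  rw [G, le_div_iff_of_neg hlt]
  linarith

lemma one_le_G_gt_one (hΦ : IsOrliczFunction Φ) {t : ℝ} (h1 : 1 < t)
    (hne : orliczM Φ t ≠ ⊤) : 1 ≤ G Φ t := by
  have ha : t ≤ (orliczM Φ t).toReal :=
    (ENNReal.ofReal_le_iff_le_toReal hne).1 (ofReal_le_M hΦ h1.le)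
  have hlt : 0 < Real.log t := Real.log_pos h1
  have hla : Real.log t ≤ Real.log ((orliczM Φ t).toReal) :=
    Real.log_le_log (lt_trans one_pos h1) ha
  rw [G, le_div_iff₀ hlt]
  linarith

lemma G_lower (hΦ : IsOrliczFunction Φ) {t₀ : ℝ} (h0 : 0 < t₀) (h1 : t₀ < 1) (k : ℕ)
    (hk : 1 ≤ k) {t : ℝ} (ht0 : 0 < t) (ht : t ≤ t₀ ^ k) :
    ((k:ℝ)/((k:ℝ)+1)) * G Φ t₀ ≤ G Φ t := by
  have hlt₀ : Real.log t₀ < 0 := Real.log_neg h0 h1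
  have htlt1 : t < 1 := lt_of_le_of_lt ht (pow_lt_one₀ h0.le h1 (by omega))
  have hlt : Real.log t < 0 := Real.log_neg ht0 htlt1
  set n : ℕ := ⌊Real.log t / Real.log t₀⌋₊ with hn
  have hkn : k ≤ n := by
    refine Nat.le_floor ?_
    rw [le_div_iff_of_neg hlt₀]
    calc Real.log t ≤ Real.log (t₀ ^ k) := Real.log_le_log ht0 ht
      _ = (k:ℝ) * Real.log t₀ := by rw [Real.log_pow]
  have hn1 : 1 ≤ n := le_trans hk hkn
  have h_t_le : t ≤ t₀ ^ n := by
    have hfl : (n:ℝ) ≤ Real.log t / Real.log t₀ :=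
      Nat.floor_le (by rw [div_nonneg_iff]; exact Or.inr ⟨hlt.le, hlt₀.le⟩)
    rw [le_div_iff_of_neg hlt₀] at hfl
    have : Real.log t ≤ Real.log (t₀ ^ n) := by
      rw [Real.log_pow]; linarith
    exact (Real.log_le_log_iff ht0 (by positivity)).1 this
  have h_t_gt : (((n:ℝ)+1)) * Real.log t₀ < Real.log t := by
    have := Nat.lt_floor_add_one (Real.log t / Real.log t₀)
    rw [div_lt_iff_of_neg hlt₀] at this
    linarith
  -- real values of M
  have hnet : orliczM Φ t ≠ ⊤ :=
    (lt_of_le_of_lt (M_le_ofReal hΦ ht0.le htlt1.le) ENNReal.ofReal_lt_top).ne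
  have hne₀ : orliczM Φ t₀ ≠ ⊤ :=
    (lt_of_le_of_lt (M_le_ofReal hΦ h0.le h1.le) ENNReal.ofReal_lt_top).ne
  set a : ℝ := (orliczM Φ t₀).toReal with hadef
  set b : ℝ := (orliczM Φ t).toReal with hbdef
  have ha0 : 0 < a := ENNReal.toReal_pos (M_pos hΦ h0).ne' hne₀
  have hb0 : 0 < b := ENNReal.toReal_pos (M_pos hΦ ht0).ne' hnet
  have ha1 : a ≤ t₀ := ENNReal.toReal_le_of_le_ofReal h0.le (M_le_ofReal hΦ h0.le h1.le)
  have hba : b ≤ a ^ n := by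
    have h1' : orliczM Φ t ≤ (orliczM Φ t₀) ^ n :=
      le_trans (M_mono hΦ ht0.le h_t_le) (M_pow hΦ h0 n)
    have := ENNReal.toReal_mono (by simp [ENNReal.pow_eq_top_iff, hne₀]) h1'
    rwa [ENNReal.toReal_pow] at this
  have hlogb : Real.log b ≤ (n:ℝ) * Real.log a := by
    calc Real.log b ≤ Real.log (a ^ n) := Real.log_le_log hb0 hba
      _ = (n:ℝ) * Real.log a := by rw [Real.log_pow]
  have hloga : Real.log a ≤ Real.log t₀ := Real.log_le_log ha0 ha1
  have hloga_neg : Real.log a < 0 := lt_of_le_of_lt hloga hlt₀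
  -- positive quantities
  set A : ℝ := -Real.log a
  set T₀ : ℝ := -Real.log t₀
  set B : ℝ := -Real.log b
  set T : ℝ := -Real.log t
  have hApos : 0 < A := by simp only [A]; linarith
  have hT₀pos : 0 < T₀ := by simp only [T₀]; linarith
  have hTpos : 0 < T := by simp only [T]; linarith
  have hBA : (n:ℝ) * A ≤ B := by simp only [A, B]; linarith
  have hTT : T ≤ ((n:ℝ)+1) * T₀ := by simp only [T, T₀]; linarith
  have hGt₀ : G Φ t₀ = A / T₀ := by rw [G, ← hadef, ← neg_div_neg_eq]
  have hGt : G Φ t = B / T := by rw [G, ← hbdef, ← neg_div_neg_eq]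
  have hGpos : 0 ≤ G Φ t₀ := le_trans zero_le_one (one_le_G_lt_one hΦ h0 h1)
  have step1 : ((k:ℝ)/((k:ℝ)+1)) * G Φ t₀ ≤ ((n:ℝ)/((n:ℝ)+1)) * G Φ t₀ := by
    refine mul_le_mul_of_nonneg_right ?_ hGpos
    rw [div_le_div_iff₀ (by positivity) (by positivity)]
    have : (k:ℝ) ≤ (n:ℝ) := by exact_mod_cast hkn
    nlinarith
  refine le_trans step1 ?_
  rw [hGt₀, hGt, div_mul_div_comm]
  refine div_le_div₀ ?_ ?_ ?_ ?_
  · have h1n : (1:ℝ) ≤ (n:ℝ) := by exact_mod_cast hn1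
    nlinarith
  · exact hBA
  · exact hTpos
  · exact hTT

lemma G_upper (hΦ : IsOrliczFunction Φ)
    (hfin : ∀ u : ℝ, 1 < u → orliczM Φ u ≠ ⊤) {t₀ : ℝ} (h1 : 1 < t₀) (k : ℕ)
    (hk : 1 ≤ k) {t : ℝ} (ht : t₀ ^ k ≤ t) :
    G Φ t ≤ (((k:ℝ)+1)/(k:ℝ)) * G Φ t₀ := by
  have h0 : (0:ℝ) < t₀ := lt_trans one_pos h1
  have hlt₀ : 0 < Real.log t₀ := Real.log_pos h1
  have ht1 : 1 < t := lt_of_lt_of_le (one_lt_pow₀ h1 (by omega)) ht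
  have ht0 : (0:ℝ) < t := lt_trans one_pos ht1
  have hlt : 0 < Real.log t := Real.log_pos ht1
  set n : ℕ := ⌊Real.log t / Real.log t₀⌋₊ with hn
  have hkn : k ≤ n := by
    refine Nat.le_floor ?_
    rw [le_div_iff₀ hlt₀]
    calc (k:ℝ) * Real.log t₀ = Real.log (t₀ ^ k) := by rw [Real.log_pow]
      _ ≤ Real.log t := Real.log_le_log (by positivity) ht
  have hn1 : 1 ≤ n := le_trans hk hkn
  have h_t_ge : t₀ ^ n ≤ t := by
    have hfl : (n:ℝ) ≤ Real.log t / Real.log t₀ := Nat.floor_le (by positivity)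
    rw [le_div_iff₀ hlt₀] at hfl
    have : Real.log (t₀ ^ n) ≤ Real.log t := by rw [Real.log_pow]; linarith
    exact (Real.log_le_log_iff (by positivity) ht0).1 this
  have h_t_lt : t ≤ t₀ ^ (n+1) := by
    have := Nat.lt_floor_add_one (Real.log t / Real.log t₀)
    rw [div_lt_iff₀ hlt₀] at this
    have : Real.log t ≤ Real.log (t₀ ^ (n+1)) := by rw [Real.log_pow]; push_cast; linarith
    exact (Real.log_le_log_iff ht0 (by positivity)).1 this
  have hnet : orliczM Φ t ≠ ⊤ := hfin t ht1
  have hne₀ : orliczM Φ t₀ ≠ ⊤ := hfin t₀ h1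
  set a : ℝ := (orliczM Φ t₀).toReal with hadef
  set b : ℝ := (orliczM Φ t).toReal with hbdef
  have ha1 : t₀ ≤ a := (ENNReal.ofReal_le_iff_le_toReal hne₀).1 (ofReal_le_M hΦ h1.le)
  have ha0 : 0 < a := lt_trans one_pos (lt_of_lt_of_le h1 ha1)
  have hb0 : 0 < b := ENNReal.toReal_pos (M_pos hΦ ht0).ne' hnet
  have hba : b ≤ a ^ (n+1) := by
    have h1' : orliczM Φ t ≤ (orliczM Φ t₀) ^ (n+1) :=
      le_trans (M_mono hΦ ht0.le h_t_lt) (M_pow hΦ h0 (n+1))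
    have := ENNReal.toReal_mono (by simp [ENNReal.pow_eq_top_iff, hne₀]) h1'
    rwa [ENNReal.toReal_pow] at this
  have hlogb : Real.log b ≤ ((n:ℝ)+1) * Real.log a := by
    calc Real.log b ≤ Real.log (a ^ (n+1)) := Real.log_le_log hb0 hba
      _ = ((n:ℝ)+1) * Real.log a := by rw [Real.log_pow]; push_cast; ring
  have hloga : Real.log t₀ ≤ Real.log a := Real.log_le_log h0 ha1
  have hloga_pos : 0 < Real.log a := lt_of_lt_of_le hlt₀ hloga
  have hlogt : (n:ℝ) * Real.log t₀ ≤ Real.log t := by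
    have : Real.log (t₀ ^ n) ≤ Real.log t := Real.log_le_log (by positivity) h_t_ge
    rwa [Real.log_pow] at this
  have hGpos : 0 ≤ G Φ t₀ := le_trans zero_le_one (one_le_G_gt_one hΦ h1 hne₀)
  have step1 : (((n:ℝ)+1)/(n:ℝ)) * G Φ t₀ ≤ (((k:ℝ)+1)/(k:ℝ)) * G Φ t₀ := by
    refine mul_le_mul_of_nonneg_right ?_ hGpos
    have hkpos : (0:ℝ) < (k:ℝ) := by exact_mod_cast hk
    have hnpos : (0:ℝ) < (n:ℝ) := by exact_mod_cast hn1
    rw [div_le_div_iff₀ hnpos hkpos]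
    have : (k:ℝ) ≤ (n:ℝ) := by exact_mod_cast hkn
    nlinarith
  refine le_trans ?_ step1
  have hGt₀ : G Φ t₀ = Real.log a / Real.log t₀ := by rw [G, ← hadef]
  have hGt : G Φ t = Real.log b / Real.log t := by rw [G, ← hbdef]
  rw [hGt₀, hGt, div_mul_div_comm]
  refine div_le_div₀ ?_ ?_ ?_ ?_
  · positivity
  · linarith
  · positivity
  · have hnpos : (0:ℝ) < (n:ℝ) := by exact_mod_cast hn1
    nlinarith

lemma G_le_G (hΦ : IsOrliczFunction Φ) (hfin : ∀ u : ℝ, 1 < u → orliczM Φ u ≠ ⊤)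
    {t t' : ℝ} (ht0 : 0 < t) (ht1 : t < 1) (ht' : 1 < t') : G Φ t ≤ G Φ t' := by
  have ht'0 : (0:ℝ) < t' := lt_trans one_pos ht'
  have hnet : orliczM Φ t ≠ ⊤ :=
    (lt_of_le_of_lt (M_le_ofReal hΦ ht0.le ht1.le) ENNReal.ofReal_lt_top).ne
  have hne' : orliczM Φ t' ≠ ⊤ := hfin t' ht'
  set a : ℝ := (orliczM Φ t).toReal with hadef
  set b : ℝ := (orliczM Φ t').toReal with hbdef
  have ha0 : 0 < a := ENNReal.toReal_pos (M_pos hΦ ht0).ne' hnet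
  have hb0 : 0 < b := ENNReal.toReal_pos (M_pos hΦ ht'0).ne' hne'
  have ha1 : a ≤ t := ENNReal.toReal_le_of_le_ofReal ht0.le (M_le_ofReal hΦ ht0.le ht1.le)
  have hb1 : t' ≤ b := (ENNReal.ofReal_le_iff_le_toReal hne').1 (ofReal_le_M hΦ ht'.le)
  set A : ℝ := -Real.log a with hA
  set T : ℝ := -Real.log t with hT
  set B : ℝ := Real.log b with hB
  set T' : ℝ := Real.log t' with hT'
  have hTpos : 0 < T := by simp only [hT]; linarith [Real.log_neg ht0 ht1]
  have hApos : 0 < A := by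
    simp only [hA]
    have : Real.log a < 0 := Real.log_neg ha0 (lt_of_le_of_lt ha1 ht1)
    linarith
  have hT'pos : 0 < T' := Real.log_pos ht'
  have hBpos : 0 < B := lt_of_lt_of_le hT'pos (Real.log_le_log ht'0 hb1)
  -- key: for all n m with m ≥ 1 and n T ≤ m T', we get n A ≤ m B
  have key : ∀ n m : ℕ, 0 < m → (n:ℝ) * T ≤ (m:ℝ) * T' → (n:ℝ) * A ≤ (m:ℝ) * B := by
    intro n m hm hcond
    have hone : (1:ℝ) ≤ t ^ n * t' ^ m := by
      have hpos : (0:ℝ) < t ^ n * t' ^ m := by positivity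
      rw [← Real.log_nonneg_iff hpos, Real.log_mul (by positivity) (by positivity),
        Real.log_pow, Real.log_pow]
      simp only [hT, hT'] at hcond
      linarith
    have hM : (1:ℝ≥0∞) ≤ (orliczM Φ t) ^ n * (orliczM Φ t') ^ m := by
      calc (1:ℝ≥0∞) = orliczM Φ 1 := (M_one hΦ).symm
        _ ≤ orliczM Φ (t ^ n * t' ^ m) := M_mono hΦ zero_le_one hone
        _ ≤ orliczM Φ (t ^ n) * orliczM Φ (t' ^ m) :=
            M_submul hΦ (by positivity) (by positivity)
              (Or.inl (pow_le_one₀ ht0.le ht1.le))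
        _ ≤ (orliczM Φ t) ^ n * (orliczM Φ t') ^ m :=
            mul_le_mul' (M_pow hΦ ht0 n) (M_pow hΦ ht'0 m)
    have hfinprod : (orliczM Φ t) ^ n * (orliczM Φ t') ^ m ≠ ⊤ :=
      ENNReal.mul_ne_top (ENNReal.pow_ne_top hnet) (ENNReal.pow_ne_top hne')
    have hreal : (1:ℝ) ≤ a ^ n * b ^ m := by
      have h := ENNReal.toReal_mono hfinprod hM
      rwa [ENNReal.toReal_one, ENNReal.toReal_mul, ENNReal.toReal_pow,
        ENNReal.toReal_pow] at h
    have hlog : 0 ≤ (n:ℝ) * Real.log a + (m:ℝ) * Real.log b := by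
      have h := Real.log_le_log (by norm_num) hreal
      rw [Real.log_one, Real.log_mul (by positivity) (by positivity),
        Real.log_pow, Real.log_pow] at h
      linarith
    simp only [hA, hB]
    linarith
  have hGt : G Φ t = A / T := by
    rw [G, ← hadef, hA, hT, neg_div_neg_eq]
  have hGt' : G Φ t' = B / T' := by
    rw [G, ← hbdef, hB, hT']
  rw [hGt, hGt', div_le_div_iff₀ hTpos hT'pos]
  by_contra hcon
  push_neg at hcon
  have hltdiv : B / A < T' / T := by
    rw [div_lt_div_iff₀ hApos hTpos]
    linarith
  obtain ⟨r, hr1, hr2⟩ := exists_rat_btwn hltdiv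
  have hrpos : (0:ℚ) < r := by
    have h0' : (0:ℝ) < B / A := by positivity
    exact_mod_cast h0'.trans hr1
  set n : ℕ := r.num.toNat with hn
  set m : ℕ := r.den with hm
  have hmpos : 0 < m := r.pos
  have hmposR : (0:ℝ) < (m:ℝ) := by exact_mod_cast hmpos
  have hnum : ((n:ℝ)) = (r.num : ℝ) := by
    rw [hn]
    exact_mod_cast Int.toNat_of_nonneg (Rat.num_pos.2 hrpos).le
  have hcast : (r:ℝ) = (n:ℝ)/(m:ℝ) := by
    rw [Rat.cast_def, hnum, hm]
  have hcond : (n:ℝ) * T ≤ (m:ℝ) * T' := by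
    have h2 : (n:ℝ)/(m:ℝ) < T'/T := hcast ▸ hr2
    rw [div_lt_div_iff₀ hmposR hTpos] at h2
    linarith
  have hres := key n m hmpos hcond
  have h1 : B/A < (n:ℝ)/(m:ℝ) := hcast ▸ hr1
  rw [div_lt_div_iff₀ hApos hmposR] at h1
  linarith


lemma tendsto_aux1 : Tendsto (fun k : ℕ => (((k:ℝ)+1)/((k:ℝ)+2))) atTop (𝓝 1) := by
  have h := (tendsto_natCast_div_add_atTop (1:ℝ)).comp (tendsto_add_atTop_nat 1)
  refine h.congr fun k => ?_
  simp only [Function.comp_apply]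
  push_cast
  ring

lemma tendsto_aux2 : Tendsto (fun k : ℕ => (((k:ℝ)+2)/((k:ℝ)+1))) atTop (𝓝 1) := by
  simpa only [inv_div, inv_one] using tendsto_aux1.inv₀ one_ne_zero

end OrliczAux

/-- For every Orlicz function `Φ`, the limits
`p_Φ = lim_{t → 0⁺} log M(t,Φ) / log t` and `q_Φ = lim_{t → ∞} log M(t,Φ) / log t`
exist in `[1,∞]`, and `1 ≤ p_Φ ≤ q_Φ ≤ ∞`. -/
theorem orlicz_indices_exist (Φ : ℝ → ℝ) (hΦ : IsOrliczFunction Φ) :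
    ∃ pΦ qΦ : EReal,
      Tendsto (orliczLogRatio Φ) (𝓝[>] (0 : ℝ)) (𝓝 pΦ) ∧
      Tendsto (orliczLogRatio Φ) atTop (𝓝 qΦ) ∧
      1 ≤ pΦ ∧ pΦ ≤ qΦ ∧ qΦ ≤ ⊤ := by
  classical
  have hfin01 : ∀ t ∈ Ioo (0:ℝ) 1, orliczM Φ t ≠ ⊤ := fun t ht =>
    (lt_of_le_of_lt (OrliczAux.M_le_ofReal hΦ ht.1.le ht.2.le) ENNReal.ofReal_lt_top).ne
  set p : EReal := ⨆ t ∈ Ioo (0:ℝ) 1, ((OrliczAux.G Φ t : ℝ) : EReal) with hpdef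
  have hev01 : ∀ᶠ t in 𝓝[>] (0:ℝ), t ∈ Ioo (0:ℝ) 1 :=
    Ioo_mem_nhdsGT_of_mem (Set.mem_Ico.2 ⟨le_rfl, one_pos⟩)
  have hlimsup : limsup (orliczLogRatio Φ) (𝓝[>] (0:ℝ)) ≤ p := by
    refine limsup_le_of_le (by isBoundedDefault) ?_
    filter_upwards [hev01] with t ht
    rw [OrliczAux.ratio_eq hΦ ht.1 (hfin01 t ht)]
    exact le_iSup₂ (f := fun t (_ : t ∈ Ioo (0:ℝ) 1) => ((OrliczAux.G Φ t : ℝ) : EReal)) t ht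
  have hliminf : p ≤ liminf (orliczLogRatio Φ) (𝓝[>] (0:ℝ)) := by
    refine iSup₂_le fun t₀ ht₀ => ?_
    have hu : Tendsto (fun k : ℕ => ((((k:ℝ)+1)/((k:ℝ)+2)) * OrliczAux.G Φ t₀)) atTop
        (𝓝 (OrliczAux.G Φ t₀)) := by
      simpa using OrliczAux.tendsto_aux1.mul_const (OrliczAux.G Φ t₀)
    refine le_of_tendsto (EReal.tendsto_coe.2 hu) (Eventually.of_forall fun k => ?_)
    refine le_liminf_of_le (by isBoundedDefault) ?_
    have hmem : Ioc (0:ℝ) (t₀^(k+1)) ∈ 𝓝[>] (0:ℝ) :=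
      Ioc_mem_nhdsGT_of_mem (Set.mem_Ico.2 ⟨le_rfl, by have := ht₀.1; positivity⟩)
    filter_upwards [hmem] with t ht
    have ht1 : t < 1 := lt_of_le_of_lt ht.2 (pow_lt_one₀ ht₀.1.le ht₀.2 (by omega))
    rw [OrliczAux.ratio_eq hΦ ht.1 (hfin01 t ⟨ht.1, ht1⟩)]
    refine EReal.coe_le_coe_iff.2 ?_
    have hG := OrliczAux.G_lower hΦ ht₀.1 ht₀.2 (k+1) (by omega) ht.1 ht.2
    push_cast at hG
    have hnum : ((k:ℝ)+1)/((k:ℝ)+2) = ((k:ℝ)+1)/((k:ℝ)+1+1) := by ring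
    rw [hnum]
    linarith
  have hp_tendsto : Tendsto (orliczLogRatio Φ) (𝓝[>] (0:ℝ)) (𝓝 p) :=
    tendsto_of_le_liminf_of_limsup_le hliminf hlimsup
  have hp1 : (1:EReal) ≤ p := by
    have h12 : (1:ℝ) ≤ OrliczAux.G Φ (1/2) :=
      OrliczAux.one_le_G_lt_one hΦ (by norm_num) (by norm_num)
    have h12' : ((1:ℝ) : EReal) ≤ ((OrliczAux.G Φ (1/2) : ℝ) : EReal) :=
      EReal.coe_le_coe_iff.2 h12
    have hmem : (1/2 : ℝ) ∈ Ioo (0:ℝ) 1 := by norm_num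
    calc (1:EReal) = ((1:ℝ):EReal) := by norm_num
      _ ≤ ((OrliczAux.G Φ (1/2) : ℝ) : EReal) := h12'
      _ ≤ p := le_iSup₂ (f := fun t (_ : t ∈ Ioo (0:ℝ) 1) =>
            ((OrliczAux.G Φ t : ℝ) : EReal)) (1/2 : ℝ) hmem
  by_cases hA : ∀ u : ℝ, 1 < u → orliczM Φ u ≠ ⊤
  · set q : EReal := ⨅ t ∈ Ioi (1:ℝ), ((OrliczAux.G Φ t : ℝ) : EReal) with hqdef
    have hliminf' : q ≤ liminf (orliczLogRatio Φ) atTop := by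
      refine le_liminf_of_le (by isBoundedDefault) ?_
      filter_upwards [eventually_gt_atTop (1:ℝ)] with t ht
      rw [OrliczAux.ratio_eq hΦ (lt_trans one_pos ht) (hA t ht)]
      exact iInf₂_le (f := fun t (_ : t ∈ Ioi (1:ℝ)) => ((OrliczAux.G Φ t : ℝ) : EReal)) t ht
    have hlimsup' : limsup (orliczLogRatio Φ) atTop ≤ q := by
      refine le_iInf₂ fun t₀ ht₀ => ?_
      have ht₀1 : (1:ℝ) < t₀ := ht₀
      have hv : Tendsto (fun k : ℕ => ((((k:ℝ)+2)/((k:ℝ)+1)) * OrliczAux.G Φ t₀)) atTop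
          (𝓝 (OrliczAux.G Φ t₀)) := by
        simpa using OrliczAux.tendsto_aux2.mul_const (OrliczAux.G Φ t₀)
      refine ge_of_tendsto (EReal.tendsto_coe.2 hv) (Eventually.of_forall fun k => ?_)
      refine limsup_le_of_le (by isBoundedDefault) ?_
      filter_upwards [eventually_ge_atTop (t₀^(k+1)), eventually_gt_atTop (1:ℝ)] with t ht h1t
      rw [OrliczAux.ratio_eq hΦ (lt_trans one_pos h1t) (hA t h1t)]
      refine EReal.coe_le_coe_iff.2 ?_
      have hG := OrliczAux.G_upper hΦ hA ht₀1 (k+1) (by omega) ht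
      push_cast at hG
      have hnum : ((k:ℝ)+2)/((k:ℝ)+1) = ((k:ℝ)+1+1)/((k:ℝ)+1) := by ring
      rw [hnum]
      linarith
    refine ⟨p, q, hp_tendsto, tendsto_of_le_liminf_of_limsup_le hliminf' hlimsup', hp1, ?_, le_top⟩
    refine iSup₂_le fun t ht => le_iInf₂ fun t' ht' => ?_
    exact EReal.coe_le_coe_iff.2 (OrliczAux.G_le_G hΦ hA ht.1 ht.2 ht')
  · push_neg at hA
    obtain ⟨u, hu1, hutop⟩ := hA
    have htop : ∀ t : ℝ, 1 < t → orliczM Φ t = ⊤ := by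
      intro t ht
      obtain ⟨nn, hnn⟩ := pow_unbounded_of_one_lt u ht
      have h1 : orliczM Φ u ≤ (orliczM Φ t) ^ nn :=
        le_trans (OrliczAux.M_mono hΦ (lt_trans one_pos hu1).le hnn.le)
          (OrliczAux.M_pow hΦ (lt_trans one_pos ht) nn)
      rw [hutop] at h1
      exact (ENNReal.pow_eq_top_iff.1 (top_le_iff.1 h1)).1
    have hevtop : ∀ᶠ t in atTop, orliczLogRatio Φ t = (⊤ : EReal) := by
      filter_upwards [eventually_gt_atTop (1:ℝ)] with t ht
      rw [orliczLogRatio, htop t ht, ENNReal.log_top]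
      exact EReal.top_mul_coe_of_pos (inv_pos.2 (Real.log_pos ht))
    have hq_tendsto : Tendsto (orliczLogRatio Φ) atTop (𝓝 (⊤ : EReal)) :=
      Tendsto.congr' (hevtop.mono fun t ht => ht.symm) tendsto_const_nhds
    exact ⟨p, ⊤, hp_tendsto, hq_tendsto, hp1, le_top, le_top⟩
end

section
/- For every Orlicz function Φ, the lower index admits the following characterization: p_Φ = sup{ p > 0 : there exists C > 0 such that ∫₀^t s^{−p} Φ(s) ds/s ≤ C t^{−p} Φ(t) for all t > 0 }, where the supremum is a value in [1,∞]. -/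
/-!
Everything is read off the equivalence `q ≤ log M(ε, Φ) / log ε ↔ M(ε, Φ) ≤ ε^q` for
`0 < ε < 1`. Convexity gives `M(ε, Φ) ≤ ε`, hence `p_Φ ≥ 1`. If the integral bound holds with
exponent `p` and constant `C`, integrating over `(εs, 2εs]` gives `Φ(εs) ≤ 2C (2ε)^p Φ(s)`, so
`M(ε, Φ) = O(ε^p)` and `p ≤ p_Φ`. Conversely, for `0 < q < p_Φ` there are `c ∈ (0, 1)` and
`m < c^q` with `Φ(cs) ≤ m Φ(s)`; on the pieces `(c^{n+1} t, c^n t]` of `(0, t]` the integrand is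
then at most a multiple of `t^{-q} Φ(t) (m c^{-q})^n`, a convergent geometric series.
-/

open MeasureTheory Filter Set
open scoped ENNReal Topology

namespace IsOrliczFunction

variable {Φ : ℝ → ℝ}

lemma nonneg (hΦ : IsOrliczFunction Φ) {s : ℝ} (hs : 0 ≤ s) : 0 ≤ Φ s :=
  hΦ.map_zero ▸ hΦ.monotoneOn self_mem_Ici hs hs

lemma mono (hΦ : IsOrliczFunction Φ) {a b : ℝ} (ha : 0 ≤ a) (hab : a ≤ b) : Φ a ≤ Φ b :=
  hΦ.monotoneOn ha (ha.trans hab) hab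

lemma map_mul_le_mul (hΦ : IsOrliczFunction Φ) {t s : ℝ} (ht0 : 0 ≤ t) (ht1 : t ≤ 1)
    (hs : 0 ≤ s) : Φ (t * s) ≤ t * Φ s := by
  simpa [hΦ.map_zero] using
    hΦ.convexOn.2 (mem_Ici.2 hs) (mem_Ici.2 le_rfl) ht0 (sub_nonneg.2 ht1) (by ring)

lemma orliczM_le_ofReal_iff (hΦ : IsOrliczFunction Φ) {ε g : ℝ} (hε0 : 0 ≤ ε) (hε1 : ε ≤ 1)
    (hg : 0 ≤ g) : orliczM Φ ε ≤ ENNReal.ofReal g ↔ ∀ s, 0 < s → Φ (ε * s) ≤ g * Φ s := by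
  refine ⟨fun h s hs => ?_, fun h => iSup₂_le fun s ⟨hs, hΦs⟩ =>
    ENNReal.ofReal_le_ofReal ((div_le_iff₀ hΦs).2 (h s hs))⟩
  rcases (hΦ.nonneg hs.le).lt_or_eq with hΦs | hΦs
  · have hle : ENNReal.ofReal (Φ (ε * s) / Φ s) ≤ ENNReal.ofReal g :=
      (le_iSup₂ (f := fun s (_ : s ∈ {s : ℝ | 0 < s ∧ 0 < Φ s}) =>
        ENNReal.ofReal (Φ (ε * s) / Φ s)) s ⟨hs, hΦs⟩).trans h
    exact (div_le_iff₀ hΦs).1 ((ENNReal.ofReal_le_ofReal_iff hg).1 hle)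
  · -- `Φ` vanishes on `[0, s]`, so both sides are `0`
    have := hΦ.mono (by positivity) (mul_le_of_le_one_left hs.le hε1)
    rw [← hΦs] at this ⊢
    linarith [hΦ.nonneg (mul_nonneg hε0 hs.le)]

lemma orliczM_le_self (hΦ : IsOrliczFunction Φ) {ε : ℝ} (hε0 : 0 ≤ ε) (hε1 : ε ≤ 1) :
    orliczM Φ ε ≤ ENNReal.ofReal ε :=
  (hΦ.orliczM_le_ofReal_iff hε0 hε1 hε0).2 fun _ hs => hΦ.map_mul_le_mul hε0 hε1 hs.le

end IsOrliczFunction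

section LogRatio

variable {Φ : ℝ → ℝ} {ε : ℝ}

lemma orliczLogRatio_eq_div (Φ : ℝ → ℝ) (ε : ℝ) :
    orliczLogRatio Φ ε = ENNReal.log (orliczM Φ ε) / (Real.log ε : EReal) := rfl

lemma coe_eq_log_ofReal_rpow_div (hε0 : 0 < ε) (hε1 : ε < 1) (q : ℝ) :
    (q : EReal) = ENNReal.log (ENNReal.ofReal (ε ^ q)) / (Real.log ε : EReal) := by
  rw [ENNReal.log_ofReal_of_pos (Real.rpow_pos_of_pos hε0 q), Real.log_rpow hε0, ← EReal.coe_div,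
    mul_div_cancel_right₀ _ (Real.log_neg hε0 hε1).ne]

lemma strictAnti_div_log (hε0 : 0 < ε) (hε1 : ε < 1) :
    StrictAnti fun x : EReal => x / (Real.log ε : EReal) :=
  EReal.strictAnti_div_right_of_neg (EReal.coe_lt_coe_iff.2 (Real.log_neg hε0 hε1))
    (EReal.coe_ne_bot _)

lemma coe_le_orliczLogRatio_iff (hε0 : 0 < ε) (hε1 : ε < 1) (q : ℝ) :
    (q : EReal) ≤ orliczLogRatio Φ ε ↔ orliczM Φ ε ≤ ENNReal.ofReal (ε ^ q) := by
  rw [coe_eq_log_ofReal_rpow_div hε0 hε1 q, orliczLogRatio_eq_div,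
    (strictAnti_div_log hε0 hε1).le_iff_ge, ENNReal.log_le_log_iff]

lemma coe_lt_orliczLogRatio_iff (hε0 : 0 < ε) (hε1 : ε < 1) (q : ℝ) :
    (q : EReal) < orliczLogRatio Φ ε ↔ orliczM Φ ε < ENNReal.ofReal (ε ^ q) := by
  rw [coe_eq_log_ofReal_rpow_div hε0 hε1 q, orliczLogRatio_eq_div,
    (strictAnti_div_log hε0 hε1).lt_iff_gt, ENNReal.log_lt_log_iff]

end LogRatio

section SetLIntegralIoc

variable {f : ℝ → ℝ} {a b c : ℝ}

lemma ofReal_mul_sub_le_setLIntegral_Ioc (hc : 0 ≤ c) (hf : ∀ u ∈ Ioc a b, c ≤ f u) :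
    ENNReal.ofReal (c * (b - a)) ≤ ∫⁻ u in Ioc a b, ENNReal.ofReal (f u) :=
  calc ENNReal.ofReal (c * (b - a)) = ∫⁻ _ in Ioc a b, ENNReal.ofReal c := by
        rw [setLIntegral_const, Real.volume_Ioc, ENNReal.ofReal_mul hc]
    _ ≤ _ := setLIntegral_mono' measurableSet_Ioc fun u hu => ENNReal.ofReal_le_ofReal (hf u hu)

lemma setLIntegral_Ioc_le_ofReal_mul_sub (hc : 0 ≤ c) (hf : ∀ u ∈ Ioc a b, f u ≤ c) :
    ∫⁻ u in Ioc a b, ENNReal.ofReal (f u) ≤ ENNReal.ofReal (c * (b - a)) :=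
  calc _ ≤ ∫⁻ _ in Ioc a b, ENNReal.ofReal c :=
        setLIntegral_mono' measurableSet_Ioc fun u hu => ENNReal.ofReal_le_ofReal (hf u hu)
    _ = _ := by rw [setLIntegral_const, Real.volume_Ioc, ENNReal.ofReal_mul hc]

end SetLIntegralIoc

def LowerIntegralBound (Φ : ℝ → ℝ) (p : ℝ) : Prop :=
  ∃ C : ℝ, 0 < C ∧ ∀ t : ℝ, 0 < t →
    (∫⁻ s in Ioc (0 : ℝ) t, ENNReal.ofReal (s ^ (-p) * Φ s / s))
      ≤ ENNReal.ofReal (C * (t ^ (-p) * Φ t))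

section IntegralToIndex

variable {Φ : ℝ → ℝ} {p C : ℝ}

lemma map_mul_le_of_lintegral_le (hΦ : IsOrliczFunction Φ) (hp : 0 ≤ p)
    (hint : ∀ t : ℝ, 0 < t → (∫⁻ s in Ioc (0 : ℝ) t, ENNReal.ofReal (s ^ (-p) * Φ s / s))
      ≤ ENNReal.ofReal (C * (t ^ (-p) * Φ t)))
    (hC : 0 < C) {ε s : ℝ} (hε0 : 0 < ε) (hε : ε ≤ 1 / 2) (hs : 0 < s) :
    Φ (ε * s) ≤ 2 * C * (2 * ε) ^ p * Φ s := by
  set b := 2 * ε * s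
  have hb : 0 < b := by positivity
  have hΦa := hΦ.nonneg (mul_nonneg hε0.le hs.le)
  have hlow : ∀ u ∈ Ioc (ε * s) b, b ^ (-p) * Φ (ε * s) / b ≤ u ^ (-p) * Φ u / u := by
    rintro u ⟨hau, hub⟩
    have hu : 0 < u := lt_trans (by positivity) hau
    have hrpow : b ^ (-p) ≤ u ^ (-p) := Real.rpow_le_rpow_of_nonpos hu hub (by linarith)
    exact div_le_div₀ (by have := hΦ.nonneg hu.le; positivity)
      (mul_le_mul hrpow (hΦ.mono (by positivity) hau.le) hΦa (by positivity)) hu hub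
  have hsub : Ioc (ε * s) b ⊆ Ioc 0 s := Ioc_subset_Ioc (by positivity) (by nlinarith)
  have hc : 0 ≤ b ^ (-p) * Φ (ε * s) / b := by positivity
  have hkey := ((ofReal_mul_sub_le_setLIntegral_Ioc hc hlow).trans
    (lintegral_mono_set hsub)).trans (hint s hs)
  rw [ENNReal.ofReal_le_ofReal_iff (by have := hΦ.nonneg hs.le; positivity)] at hkey
  have hY : 0 < (2 * ε) ^ p := by positivity
  have hX : 0 < s ^ (-p) := by positivity
  have hb' : b ^ (-p) = s ^ (-p) / (2 * ε) ^ p := by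
    rw [Real.mul_rpow (by positivity) hs.le, Real.rpow_neg (by positivity)]
    ring
  rw [hb', show b - ε * s = b / 2 by ring] at hkey
  have : s ^ (-p) * (Φ (ε * s) / (2 * (2 * ε) ^ p)) ≤ s ^ (-p) * (C * Φ s) := by
    convert hkey using 1 <;> field_simp
  rw [mul_le_mul_iff_right₀ hX, div_le_iff₀ (by positivity)] at this
  linarith

lemma LowerIntegralBound.eventually_orliczM_le (hΦ : IsOrliczFunction Φ) (hp : 0 ≤ p)
    (h : LowerIntegralBound Φ p) :
    ∃ K : ℝ, ∀ᶠ ε in 𝓝[>] (0 : ℝ), orliczM Φ ε ≤ ENNReal.ofReal (K * ε ^ p) := by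
  obtain ⟨C, hC, hint⟩ := h
  refine ⟨2 * C * 2 ^ p, ?_⟩
  filter_upwards [Ioc_mem_nhdsGT (by norm_num : (0 : ℝ) < 1 / 2)] with ε ⟨hε0, hε⟩
  refine (hΦ.orliczM_le_ofReal_iff hε0.le (by linarith) (by positivity)).2 fun s hs => ?_
  rw [mul_assoc (2 * C) (2 ^ p), ← Real.mul_rpow zero_le_two hε0.le]
  exact map_mul_le_of_lintegral_le hΦ hp hint hC hε0 hε hs

lemma coe_le_of_tendsto_orliczLogRatio {pΦ : EReal}
    (hpΦ : Tendsto (orliczLogRatio Φ) (𝓝[>] (0 : ℝ)) (𝓝 pΦ)) {K : ℝ}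
    (hM : ∀ᶠ ε in 𝓝[>] (0 : ℝ), orliczM Φ ε ≤ ENNReal.ofReal (K * ε ^ p)) :
    (p : EReal) ≤ pΦ := by
  refine le_of_forall_lt_imp_le_of_dense fun c hc => ?_
  obtain ⟨q, hcq, hqp⟩ := EReal.lt_iff_exists_real_btwn.1 hc
  have hpq : 0 < p - q := sub_pos.2 (EReal.coe_lt_coe_iff.1 hqp)
  have hsmall : Tendsto (fun ε : ℝ => K * ε ^ (p - q)) (𝓝[>] 0) (𝓝 0) := by
    simpa [Real.zero_rpow hpq.ne'] using
      ((Real.continuousAt_rpow_const 0 _ (Or.inr hpq.le)).tendsto.mono_left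
        nhdsWithin_le_nhds).const_mul K
  refine hcq.le.trans (ge_of_tendsto hpΦ ?_)
  filter_upwards [hM, hsmall.eventually (eventually_le_nhds one_pos),
    Ioo_mem_nhdsGT one_pos] with ε hMε hKε ⟨hε0, hε1⟩
  rw [coe_le_orliczLogRatio_iff hε0 hε1]
  refine hMε.trans (ENNReal.ofReal_le_ofReal ?_)
  calc K * ε ^ p = K * ε ^ (p - q) * ε ^ q := by
        rw [mul_assoc, ← Real.rpow_add hε0, sub_add_cancel]
    _ ≤ ε ^ q := mul_le_of_le_one_left (by positivity) hKε

end IntegralToIndex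

lemma map_pow_mul_le_of_map_mul_le {f : ℝ → ℝ} {c m : ℝ} (hc : 0 < c) (hm : 0 ≤ m)
    (h : ∀ s, 0 < s → f (c * s) ≤ m * f s) (n : ℕ) {s : ℝ} (hs : 0 < s) :
    f (c ^ n * s) ≤ m ^ n * f s := by
  induction n generalizing s with
  | zero => simp
  | succ n ih =>
    calc f (c ^ (n + 1) * s) = f (c ^ n * (c * s)) := by rw [pow_succ, mul_assoc]
      _ ≤ m ^ n * f (c * s) := ih (by positivity)
      _ ≤ m ^ n * (m * f s) := by gcongr; exact h s hs
      _ = m ^ (n + 1) * f s := by ring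

lemma Ioc_zero_subset_iUnion_Ioc_pow_mul {c t : ℝ} (hc0 : 0 < c) (hc1 : c < 1) :
    Ioc 0 t ⊆ ⋃ n : ℕ, Ioc (c ^ (n + 1) * t) (c ^ n * t) := by
  rintro x ⟨hx0, hxt⟩
  have ht : 0 < t := hx0.trans_le hxt
  obtain ⟨n, hlt, hle⟩ := exists_nat_pow_near_of_lt_one (div_pos hx0 ht)
    ((div_le_one ht).2 hxt) hc0 hc1
  exact mem_iUnion.2 ⟨n, (lt_div_iff₀ ht).1 hlt, (div_le_iff₀ ht).1 hle⟩

section IndexToIntegral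

variable {Φ : ℝ → ℝ} {p c m : ℝ}

lemma setLIntegral_Ioc_pow_mul_le (hΦ : IsOrliczFunction Φ) (hp : 0 ≤ p) (hc0 : 0 < c)
    (hm : 0 ≤ m) (hsub : ∀ s, 0 < s → Φ (c * s) ≤ m * Φ s) {t : ℝ} (ht : 0 < t) (n : ℕ) :
    ∫⁻ s in Ioc (c ^ (n + 1) * t) (c ^ n * t), ENNReal.ofReal (s ^ (-p) * Φ s / s)
      ≤ ENNReal.ofReal ((c⁻¹ - 1) * c ^ (-p) * (t ^ (-p) * Φ t) * (m * c ^ (-p)) ^ n) := by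
  set a := c ^ (n + 1) * t
  have ha : 0 < a := by positivity
  have hΦt := hΦ.nonneg ht.le
  have hup : ∀ u ∈ Ioc a (c ^ n * t), u ^ (-p) * Φ u / u ≤ a ^ (-p) * (m ^ n * Φ t) / a := by
    rintro u ⟨hau, hub⟩
    have hu : 0 < u := ha.trans hau
    have hΦu : Φ u ≤ m ^ n * Φ t :=
      (hΦ.mono hu.le hub).trans (map_pow_mul_le_of_map_mul_le hc0 hm hsub n ht)
    have hrpow : u ^ (-p) ≤ a ^ (-p) := Real.rpow_le_rpow_of_nonpos ha hau.le (by linarith)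
    exact div_le_div₀ (by positivity) (mul_le_mul hrpow hΦu (hΦ.nonneg hu.le) (by positivity))
      ha hau.le
  refine (setLIntegral_Ioc_le_ofReal_mul_sub (by positivity) hup).trans_eq (congrArg _ ?_)
  have hpow : a ^ (-p) = c ^ (-p) * (c ^ (-p)) ^ n * t ^ (-p) := by
    rw [Real.mul_rpow (by positivity) ht.le, ← Real.rpow_pow_comm hc0.le, pow_succ']
  rw [hpow, show c ^ n * t = a / c by simp only [a, pow_succ]; field_simp]
  field_simp
  ring

lemma LowerIntegralBound.of_map_mul_le (hΦ : IsOrliczFunction Φ) (hp : 0 ≤ p) (hc0 : 0 < c)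
    (hc1 : c < 1) (hm : 0 ≤ m) (hmc : m < c ^ p) (hsub : ∀ s, 0 < s → Φ (c * s) ≤ m * Φ s) :
    LowerIntegralBound Φ p := by
  set r := m * c ^ (-p)
  have hr0 : 0 ≤ r := by positivity
  have hr1 : r < 1 := by
    calc r < c ^ p * c ^ (-p) := mul_lt_mul_of_pos_right hmc (by positivity)
      _ = 1 := by rw [← Real.rpow_add hc0, add_neg_cancel, Real.rpow_zero]
  have hc : 0 < c⁻¹ - 1 := sub_pos.2 (one_lt_inv₀ hc0 |>.2 hc1)
  refine ⟨(c⁻¹ - 1) * c ^ (-p) / (1 - r), by have := sub_pos.2 hr1; positivity, fun t ht => ?_⟩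
  set A := (c⁻¹ - 1) * c ^ (-p) * (t ^ (-p) * Φ t)
  have hA : 0 ≤ A := by have := hΦ.nonneg ht.le; positivity
  calc (∫⁻ s in Ioc 0 t, ENNReal.ofReal (s ^ (-p) * Φ s / s))
      ≤ ∫⁻ s in ⋃ n : ℕ, Ioc (c ^ (n + 1) * t) (c ^ n * t),
          ENNReal.ofReal (s ^ (-p) * Φ s / s) :=
        lintegral_mono_set (Ioc_zero_subset_iUnion_Ioc_pow_mul hc0 hc1)
    _ ≤ ∑' n : ℕ, ∫⁻ s in Ioc (c ^ (n + 1) * t) (c ^ n * t),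
          ENNReal.ofReal (s ^ (-p) * Φ s / s) := lintegral_iUnion_le _ _
    _ ≤ ∑' n : ℕ, ENNReal.ofReal (A * r ^ n) :=
        ENNReal.tsum_le_tsum (setLIntegral_Ioc_pow_mul_le hΦ hp hc0 hm hsub ht)
    _ = ENNReal.ofReal ((c⁻¹ - 1) * c ^ (-p) / (1 - r) * (t ^ (-p) * Φ t)) := by
        rw [← ENNReal.ofReal_tsum_of_nonneg (fun n => by positivity)
          ((summable_geometric_of_lt_one hr0 hr1).mul_left A), tsum_mul_left,
          tsum_geometric_of_lt_one hr0 hr1, div_mul_eq_mul_div, div_eq_mul_inv]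

lemma lowerIntegralBound_of_coe_lt (hΦ : IsOrliczFunction Φ) {pΦ : EReal}
    (hpΦ : Tendsto (orliczLogRatio Φ) (𝓝[>] (0 : ℝ)) (𝓝 pΦ)) (hp : 0 ≤ p)
    (hppΦ : (p : EReal) < pΦ) : LowerIntegralBound Φ p := by
  obtain ⟨c, hpc, hc0, hc1⟩ :=
    ((hpΦ.eventually (eventually_gt_nhds hppΦ)).and (Ioo_mem_nhdsGT one_pos)).exists
  rw [coe_lt_orliczLogRatio_iff hc0 hc1] at hpc
  obtain ⟨m, hm, hMm, hmc⟩ := ENNReal.lt_iff_exists_real_btwn.1 hpc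
  exact LowerIntegralBound.of_map_mul_le hΦ hp hc0 hc1 hm
    ((ENNReal.ofReal_lt_ofReal_iff (by positivity)).1 hmc)
    ((hΦ.orliczM_le_ofReal_iff hc0.le hc1.le hm).1 hMm.le)

end IndexToIntegral

/-- characterization of the lower index `p_Φ` of an Orlicz function:
`p_Φ = sup { p > 0 : ∃ C > 0, ∫₀ᵗ s^{-p} Φ(s) ds/s ≤ C t^{-p} Φ(t) for all t > 0 }`,
a value in `[1, ∞]`. -/
theorem orlicz_lower_index_characterization (Φ : ℝ → ℝ) (hΦ : IsOrliczFunction Φ)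
    (pΦ : EReal) (hpΦ : Tendsto (orliczLogRatio Φ) (𝓝[>] (0 : ℝ)) (𝓝 pΦ)) :
    pΦ = sSup ((fun p : ℝ => (p : EReal)) ''
        {p : ℝ | 0 < p ∧ ∃ C : ℝ, 0 < C ∧ ∀ t : ℝ, 0 < t →
          (∫⁻ s in Set.Ioc (0 : ℝ) t, ENNReal.ofReal (s ^ (-p) * Φ s / s))
            ≤ ENNReal.ofReal (C * (t ^ (-p) * Φ t))}) ∧
      1 ≤ pΦ := by
  have h_one : (1 : EReal) ≤ pΦ := by
    refine ge_of_tendsto hpΦ ?_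
    filter_upwards [Ioo_mem_nhdsGT one_pos] with ε ⟨hε0, hε1⟩
    exact_mod_cast (coe_le_orliczLogRatio_iff hε0 hε1 1).2
      (by simpa using hΦ.orliczM_le_self hε0.le hε1.le)
  refine ⟨le_antisymm ?_ (sSup_le ?_), h_one⟩
  · refine le_of_forall_lt_imp_le_of_dense fun c hc => ?_
    obtain ⟨q, hcq, hqpΦ⟩ :=
      EReal.lt_iff_exists_real_btwn.1 (max_lt hc (zero_lt_one.trans_le h_one))
    have hq : 0 < q := EReal.coe_pos.1 ((le_max_right _ _).trans_lt hcq)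
    refine ((le_max_left _ _).trans hcq.le).trans (le_sSup ⟨q, ⟨hq, ?_⟩, rfl⟩)
    exact lowerIntegralBound_of_coe_lt hΦ hpΦ hq.le hqpΦ
  · rintro _ ⟨p, ⟨hp, hbound⟩, rfl⟩
    obtain ⟨K, hK⟩ := LowerIntegralBound.eventually_orliczM_le hΦ hp.le hbound
    exact coe_le_of_tendsto_orliczLogRatio hpΦ hK
end

section
/- Example 4.6, second part: For a > 1 and b > 0, the Orlicz function Φ(t) = t^a · ln(1 + t^b) has indices p_Φ = a and q_Φ = a + b; that is, log M(t,Φ)/log t converges to a as t → 0⁺ and converges to a + b as t → ∞. -/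
open MeasureTheory Filter Set
open scoped ENNReal Topology

/-!
For `Φ(s) = s^a log(1 + s^b)` and `t > 0` one has
`Φ(ts)/Φ(s) = t^a · log(1 + t^b x)/log(1 + x)` with `x = s^b`. The last factor lies between
`1` and `t^b` (monotonicity of `log`, and Bernoulli's inequality `1 + cx ≤ (1 + x)^c` for
`c ≥ 1`), tends to `1` as `x → ∞` and to `t^b` as `x → 0`. Hence `M(t, Φ) = t^a` for `t < 1`
and `M(t, Φ) = t^(a+b)` for `t > 1`, so `log M(t, Φ) / log t` is eventually constant at both ends.
-/

open Real

theorem orliczM_eq_of_le_of_tendsto {Φ : ℝ → ℝ} {t c : ℝ} {l : Filter ℝ} [l.NeBot]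
    (hpos : ∀ s, 0 < s → 0 < Φ s) (hl : ∀ᶠ s in l, 0 < s)
    (hle : ∀ s, 0 < s → Φ (t * s) / Φ s ≤ c)
    (hlim : Tendsto (fun s => Φ (t * s) / Φ s) l (𝓝 c)) :
    orliczM Φ t = ENNReal.ofReal c := by
  refine le_antisymm (iSup₂_le fun s hs => ENNReal.ofReal_le_ofReal (hle s hs.1)) ?_
  refine le_of_tendsto ((ENNReal.continuous_ofReal.tendsto c).comp hlim) ?_
  filter_upwards [hl] with s hs
  exact le_iSup₂_of_le s ⟨hs, hpos s hs⟩ le_rfl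

theorem orliczLogRatio_eq_of_orliczM_eq_rpow {Φ : ℝ → ℝ} {t c : ℝ} (ht₀ : 0 < t) (ht₁ : t ≠ 1)
    (hM : orliczM Φ t = ENNReal.ofReal (t ^ c)) :
    orliczLogRatio Φ t = c := by
  rw [orliczLogRatio, hM, ENNReal.log_ofReal_of_pos (rpow_pos_of_pos ht₀ c), log_rpow ht₀,
    ← EReal.coe_mul, mul_assoc, mul_inv_cancel₀ (log_ne_zero_of_pos_of_ne_one ht₀ ht₁), mul_one]

theorem tendsto_orliczLogRatio_of_eventually_orliczM_eq_rpow {Φ : ℝ → ℝ} {c : ℝ}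
    {l : Filter ℝ} (h : ∀ᶠ t in l, 0 < t ∧ t ≠ 1 ∧ orliczM Φ t = ENNReal.ofReal (t ^ c)) :
    Tendsto (orliczLogRatio Φ) l (𝓝 c) :=
  tendsto_const_nhds.congr' <| h.mono fun _ ⟨ht₀, ht₁, hM⟩ =>
    (orliczLogRatio_eq_of_orliczM_eq_rpow ht₀ ht₁ hM).symm

theorem log_one_add_mul_le_mul_log_one_add {c x : ℝ} (hc : 1 ≤ c) (hx : 0 ≤ x) :
    log (1 + c * x) ≤ c * log (1 + x) := by
  calc log (1 + c * x) ≤ log ((1 + x) ^ c) :=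
        log_le_log (by positivity) (one_add_mul_self_le_rpow_one_add (by linarith) hc)
    _ = c * log (1 + x) := log_rpow (by linarith) c

theorem tendsto_log_one_add_mul_div_log_one_add_nhdsGT_zero (c : ℝ) :
    Tendsto (fun x => log (1 + c * x) / log (1 + x)) (𝓝[>] 0) (𝓝 c) := by
  have hderiv : ∀ k : ℝ, HasDerivAt (fun x => log (1 + k * x)) k 0 := fun k => by
    simpa using (((hasDerivAt_id (0 : ℝ)).const_mul k).const_add 1).log (by norm_num)
  have hslopes := ((hderiv c).tendsto_slope_zero_right.div
    (hderiv 1).tendsto_slope_zero_right one_ne_zero)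
  rw [div_one] at hslopes
  refine hslopes.congr' ?_
  filter_upwards [self_mem_nhdsWithin] with x (hx : 0 < x)
  simp [smul_eq_mul, mul_div_mul_left _ _ (inv_ne_zero hx.ne')]

theorem tendsto_log_one_add_mul_div_log_one_add_atTop {c : ℝ} (hc : 0 < c) :
    Tendsto (fun x => log (1 + c * x) / log (1 + x)) atTop (𝓝 1) := by
  have hquot : Tendsto (fun x => (1 + c * x) / (1 + x)) atTop (𝓝 c) := by
    have h : Tendsto (fun x : ℝ => c + (1 - c) / (1 + x)) atTop (𝓝 (c + 0)) :=
      (tendsto_const_nhds.div_atTop (tendsto_atTop_add_const_left _ 1 tendsto_id)).const_add c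
    rw [add_zero] at h
    refine h.congr' ?_
    filter_upwards [eventually_gt_atTop 0] with x hx
    field_simp
    ring
  have hdiff : Tendsto (fun x => log ((1 + c * x) / (1 + x)) / log (1 + x)) atTop (𝓝 0) :=
    ((continuousAt_log hc.ne').tendsto.comp hquot).div_atTop
      (tendsto_log_atTop.comp (tendsto_atTop_add_const_left _ 1 tendsto_id))
  have h := hdiff.add_const 1
  rw [zero_add] at h
  refine h.congr' ?_
  filter_upwards [eventually_gt_atTop 0] with x hx
  have hlog : log (1 + x) ≠ 0 := (log_pos (by linarith)).ne'
  rw [log_div (by positivity) (by positivity), sub_div, div_self hlog, sub_add_cancel]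

theorem tendsto_rpow_nhdsGT_zero_nhdsGT_zero {b : ℝ} (hb : 0 < b) :
    Tendsto (fun s : ℝ => s ^ b) (𝓝[>] 0) (𝓝[>] 0) := by
  refine tendsto_nhdsWithin_iff.2 ⟨?_, ?_⟩
  · simpa [zero_rpow hb.ne'] using
      (continuousAt_rpow_const 0 b (Or.inr hb.le)).tendsto.mono_left nhdsWithin_le_nhds
  · filter_upwards [self_mem_nhdsWithin] with s (hs : 0 < s)
    exact rpow_pos_of_pos hs b

noncomputable def rpowMulLogOneAddRpow (a b s : ℝ) : ℝ := s ^ a * log (1 + s ^ b)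

section rpowMulLogOneAddRpow

variable {a b : ℝ}

theorem rpowMulLogOneAddRpow_pos {s : ℝ} (hs : 0 < s) : 0 < rpowMulLogOneAddRpow a b s :=
  mul_pos (rpow_pos_of_pos hs a) (log_pos (by linarith [rpow_pos_of_pos hs b]))

theorem rpowMulLogOneAddRpow_mul_div {t s : ℝ} (ht : 0 < t) (hs : 0 < s) :
    rpowMulLogOneAddRpow a b (t * s) / rpowMulLogOneAddRpow a b s =
      t ^ a * (log (1 + t ^ b * s ^ b) / log (1 + s ^ b)) := by
  have hlog : log (1 + s ^ b) ≠ 0 := (log_pos (by linarith [rpow_pos_of_pos hs b])).ne'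
  have hsa : s ^ a ≠ 0 := (rpow_pos_of_pos hs a).ne'
  rw [rpowMulLogOneAddRpow, rpowMulLogOneAddRpow, mul_rpow ht.le hs.le, mul_rpow ht.le hs.le]
  field_simp

theorem orliczM_rpowMulLogOneAddRpow_of_lt_one (hb : 0 < b) {t : ℝ} (ht₀ : 0 < t) (ht₁ : t < 1) :
    orliczM (rpowMulLogOneAddRpow a b) t = ENNReal.ofReal (t ^ a) := by
  refine orliczM_eq_of_le_of_tendsto (fun s => rpowMulLogOneAddRpow_pos)
    (eventually_gt_atTop 0) (fun s hs => ?_) ?_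
  · have hsb := rpow_pos_of_pos hs b
    have htb : t ^ b ≤ 1 := rpow_le_one ht₀.le ht₁.le hb.le
    rw [rpowMulLogOneAddRpow_mul_div ht₀ hs]
    refine mul_le_of_le_one_right (rpow_nonneg ht₀.le a) (div_le_one_of_le₀ ?_ ?_)
    · exact log_le_log (by positivity) (by nlinarith)
    · exact (log_pos (by linarith)).le
  · have h := tendsto_const_nhds (x := t ^ a) |>.mul
      ((tendsto_log_one_add_mul_div_log_one_add_atTop (rpow_pos_of_pos ht₀ b)).comp
        (tendsto_rpow_atTop hb))
    rw [mul_one] at h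
    refine h.congr' ?_
    filter_upwards [eventually_gt_atTop 0] with s hs
    exact (rpowMulLogOneAddRpow_mul_div ht₀ hs).symm

theorem orliczM_rpowMulLogOneAddRpow_of_one_lt (hb : 0 < b) {t : ℝ} (ht : 1 < t) :
    orliczM (rpowMulLogOneAddRpow a b) t = ENNReal.ofReal (t ^ (a + b)) := by
  have ht₀ : 0 < t := one_pos.trans ht
  refine orliczM_eq_of_le_of_tendsto (l := 𝓝[>] 0) (fun s => rpowMulLogOneAddRpow_pos)
    self_mem_nhdsWithin (fun s hs => ?_) ?_
  · have hlog : 0 < log (1 + s ^ b) := log_pos (by linarith [rpow_pos_of_pos hs b])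
    rw [rpowMulLogOneAddRpow_mul_div ht₀ hs, rpow_add ht₀]
    refine mul_le_mul_of_nonneg_left ((div_le_iff₀ hlog).2 ?_) (rpow_nonneg ht₀.le a)
    exact log_one_add_mul_le_mul_log_one_add (one_le_rpow ht.le hb.le) (rpow_nonneg hs.le b)
  · have h := tendsto_const_nhds (x := t ^ a) |>.mul
      ((tendsto_log_one_add_mul_div_log_one_add_nhdsGT_zero (t ^ b)).comp
        (tendsto_rpow_nhdsGT_zero_nhdsGT_zero hb))
    rw [← rpow_add ht₀] at h
    refine h.congr' ?_
    filter_upwards [self_mem_nhdsWithin] with s (hs : 0 < s)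
    exact (rpowMulLogOneAddRpow_mul_div ht₀ hs).symm

end rpowMulLogOneAddRpow

theorem orlicz_indices_rpow_mul_log_general (a b : ℝ) (hb : 0 < b) :
    Tendsto (orliczLogRatio (fun t : ℝ => t ^ a * Real.log (1 + t ^ b)))
        (𝓝[>] (0 : ℝ)) (𝓝 ((a : EReal))) ∧
      Tendsto (orliczLogRatio (fun t : ℝ => t ^ a * Real.log (1 + t ^ b)))
        atTop (𝓝 (((a + b : ℝ) : EReal))) := by
  constructor
  · refine tendsto_orliczLogRatio_of_eventually_orliczM_eq_rpow ?_
    filter_upwards [Ioo_mem_nhdsGT one_pos] with t ⟨ht₀, ht₁⟩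
    exact ⟨ht₀, ht₁.ne, orliczM_rpowMulLogOneAddRpow_of_lt_one hb ht₀ ht₁⟩
  · refine tendsto_orliczLogRatio_of_eventually_orliczM_eq_rpow ?_
    filter_upwards [eventually_gt_atTop 1] with t ht
    exact ⟨one_pos.trans ht, ht.ne', orliczM_rpowMulLogOneAddRpow_of_one_lt hb ht⟩

/-- Example 4.6, second part: for `a > 1` and `b > 0`, the Orlicz function
`Φ(t) = t^a · ln(1 + t^b)` has indices `p_Φ = a` and `q_Φ = a + b`. -/
theorem orlicz_indices_rpow_mul_log (a b : ℝ) (ha : 1 < a) (hb : 0 < b) :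
    Tendsto (orliczLogRatio (fun t : ℝ => t ^ a * Real.log (1 + t ^ b)))
        (𝓝[>] (0 : ℝ)) (𝓝 ((a : EReal))) ∧
      Tendsto (orliczLogRatio (fun t : ℝ => t ^ a * Real.log (1 + t ^ b)))
        atTop (𝓝 (((a + b : ℝ) : EReal))) :=
  orlicz_indices_rpow_mul_log_general a b hb
end

section
/- Example 4.7, first part: Let 0 < c < 1/2 and p > 1/(1 − 2c). Define Φ(0) = 0 and Φ(t) = t^p · (1 + c·sin(p·ln t)) for t > 0. Then Φ is an Orlicz function, i.e. it is continuous on [0,∞) (in particular continuous at 0), nondecreasing and convex, with Φ(0) = 0 and lim_{t→∞} Φ(t) = ∞. -/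
/-!
The functions `t ^ q * (a + b sin (p log t) + d cos (p log t))` form a family closed under
differentiation: the derivative has exponent `q - 1` and coefficients
`(q a, q b - p d, q d + p b)`. Such a function is nonnegative on `[0, ∞)` as soon as
`|b| + |d| ≤ a`. For `Φ` (exponent `p`, coefficients `(1, c, 0)`) the coefficients of `Φ'`
and `Φ''` are `p (1, c, c)` and `p (p - 1, -c, (2p - 1) c)`, and the condition for `Φ''` reads
`2 p c ≤ p - 1`, i.e. `1 ≤ p (1 - 2c)`; monotonicity and convexity follow from `Φ', Φ'' ≥ 0`.
-/

open MeasureTheory Filter Set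
open scoped ENNReal Topology

open Real

theorem IsOrliczFunction.of_hasDerivAt2_nonneg {Φ Φ' Φ'' : ℝ → ℝ}
    (hΦ : ContinuousOn Φ (Ici 0)) (hΦ0 : Φ 0 = 0)
    (hΦ' : ∀ t, 0 < t → HasDerivAt Φ (Φ' t) t) (hΦ'' : ∀ t, 0 < t → HasDerivAt Φ' (Φ'' t) t)
    (hΦ'_nonneg : ∀ t, 0 < t → 0 ≤ Φ' t) (hΦ''_nonneg : ∀ t, 0 < t → 0 ≤ Φ'' t)
    (htop : Tendsto Φ atTop atTop) : IsOrliczFunction Φ where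
  continuousOn := hΦ
  monotoneOn := monotoneOn_of_hasDerivWithinAt_nonneg (convex_Ici 0) hΦ
    (by simpa using fun t ht => (hΦ' t ht).hasDerivWithinAt) (by simpa using hΦ'_nonneg)
  convexOn := convexOn_of_hasDerivWithinAt2_nonneg (convex_Ici 0) hΦ
    (by simpa using fun t ht => (hΦ' t ht).hasDerivWithinAt)
    (by simpa using fun t ht => (hΦ'' t ht).hasDerivWithinAt) (by simpa using hΦ''_nonneg)
  map_zero := hΦ0
  tendsto_atTop := htop

theorem abs_mul_sin_add_mul_cos_le (b d x : ℝ) : |b * sin x + d * cos x| ≤ |b| + |d| :=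
  calc |b * sin x + d * cos x| ≤ |b| * |sin x| + |d| * |cos x| := by
        simpa only [abs_mul] using abs_add_le (b * sin x) (d * cos x)
    _ ≤ |b| * 1 + |d| * 1 := by gcongr; exacts [abs_sin_le_one x, abs_cos_le_one x]
    _ = |b| + |d| := by ring

theorem sub_abs_sub_abs_le_add_mul_sin_add_mul_cos (a b d x : ℝ) :
    a - |b| - |d| ≤ a + b * sin x + d * cos x := by
  linarith [neg_abs_le (b * sin x + d * cos x), abs_mul_sin_add_mul_cos_le b d x]

noncomputable def rpowMulTrigLog (q p a b d t : ℝ) : ℝ :=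
  t ^ q * (a + b * sin (p * log t) + d * cos (p * log t))

section

variable {q p a b d : ℝ}

theorem rpowMulTrigLog_zero (hq : q ≠ 0) : rpowMulTrigLog q p a b d 0 = 0 := by
  simp [rpowMulTrigLog, zero_rpow hq]

theorem hasDerivAt_rpowMulTrigLog {t : ℝ} (ht : t ≠ 0) :
    HasDerivAt (rpowMulTrigLog q p a b d)
      (rpowMulTrigLog (q - 1) p (q * a) (q * b - p * d) (q * d + p * b) t) t := by
  have hlog : HasDerivAt (fun t => p * log t) (p * t⁻¹) t := (hasDerivAt_log ht).const_mul p
  have htrig := ((((hlog.sin).const_mul b).const_add a).add ((hlog.cos).const_mul d))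
  refine ((hasDerivAt_rpow_const (p := q) (Or.inl ht)).mul htrig).congr_deriv ?_
  simp only [rpowMulTrigLog, Pi.add_apply, rpow_sub_one ht]
  field_simp
  ring

theorem continuous_rpowMulTrigLog (hq : 0 < q) : Continuous (rpowMulTrigLog q p a b d) := by
  refine continuous_iff_continuousAt.2 fun t => ?_
  rcases eq_or_ne t 0 with rfl | ht
  · have hpow : Tendsto (fun t : ℝ => t ^ q) (𝓝 0) (𝓝 0) := by
      simpa [zero_rpow hq.ne'] using (continuousAt_rpow_const 0 q (Or.inr hq.le)).tendsto
    have hbdd : IsBoundedUnder (· ≤ ·) (𝓝 0)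
        (fun t : ℝ => ‖a + b * sin (p * log t) + d * cos (p * log t)‖) :=
      isBoundedUnder_of ⟨|a| + (|b| + |d|), fun t => by
        rw [Real.norm_eq_abs, add_assoc]
        exact (abs_add_le _ _).trans (by gcongr; exact abs_mul_sin_add_mul_cos_le b d _)⟩
    rw [ContinuousAt, rpowMulTrigLog_zero hq.ne']
    exact hpow.zero_mul_isBoundedUnder_le hbdd
  · exact (hasDerivAt_rpowMulTrigLog ht).continuousAt

theorem rpowMulTrigLog_nonneg {t : ℝ} (ht : 0 ≤ t) (h : |b| + |d| ≤ a) :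
    0 ≤ rpowMulTrigLog q p a b d t :=
  mul_nonneg (rpow_nonneg ht q)
    (by linarith [sub_abs_sub_abs_le_add_mul_sin_add_mul_cos a b d (p * log t)])

theorem tendsto_rpowMulTrigLog_atTop (hq : 0 < q) (h : |b| + |d| < a) :
    Tendsto (rpowMulTrigLog q p a b d) atTop atTop := by
  refine tendsto_atTop_mono' atTop ?_ ((tendsto_rpow_atTop hq).const_mul_atTop (sub_pos.2 h))
  filter_upwards [eventually_ge_atTop 0] with t ht
  rw [mul_comm]
  exact mul_le_mul_of_nonneg_left
    (by linarith [sub_abs_sub_abs_le_add_mul_sin_add_mul_cos a b d (p * log t)])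
    (rpow_nonneg ht q)

end

/-- Example 4.7, first part: for `0 < c < 1/2` and `p > 1/(1 - 2c)`, the
function given by `Φ(0) = 0` and `Φ(t) = t^p (1 + c sin(p ln t))` for `t > 0` is an
Orlicz function. -/
theorem isOrlicz_rpow_mul_one_add_sin (c p : ℝ) (hc0 : 0 < c) (hc : c < 1 / 2)
    (hp : 1 / (1 - 2 * c) < p) :
    IsOrliczFunction (fun t : ℝ =>
      if t = 0 then 0 else t ^ p * (1 + c * Real.sin (p * Real.log t))) := by
  have hkey : 1 < p * (1 - 2 * c) := by rwa [div_lt_iff₀ (by linarith)] at hp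
  have hp1 : 1 < p := by nlinarith
  have hp0 : 0 < p := by linarith
  have hΦ : (fun t : ℝ => if t = 0 then 0 else t ^ p * (1 + c * Real.sin (p * Real.log t))) =
      rpowMulTrigLog p p 1 c 0 := by
    funext t
    split_ifs with ht
    · rw [ht, rpowMulTrigLog_zero hp0.ne']
    · simp [rpowMulTrigLog]
  rw [hΦ]
  refine .of_hasDerivAt2_nonneg (continuous_rpowMulTrigLog hp0).continuousOn
    (rpowMulTrigLog_zero hp0.ne') (fun t ht => hasDerivAt_rpowMulTrigLog ht.ne')
    (fun t ht => hasDerivAt_rpowMulTrigLog ht.ne') (fun t ht => rpowMulTrigLog_nonneg ht.le ?_)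
    (fun t ht => rpowMulTrigLog_nonneg ht.le ?_) (tendsto_rpowMulTrigLog_atTop hp0 ?_)
  · simp only [mul_zero, sub_zero, zero_add, mul_one]
    rw [abs_of_pos (by positivity)]
    nlinarith
  · have hsin : (p - 1) * (p * c - p * 0) - p * (p * 0 + p * c) = -(p * c) := by ring
    have hcos : (p - 1) * (p * 0 + p * c) + p * (p * c - p * 0) = (2 * p - 1) * (p * c) := by
      ring
    rw [hsin, hcos, abs_neg, abs_of_pos (by positivity),
      abs_of_pos (mul_pos (by linarith) (by positivity))]
    nlinarith
  · simpa [abs_of_pos hc0] using hc.trans (by norm_num)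
end

section
/- Example 4.7, second part: Let 0 < c < 1/2 and p > 1/(1 − 2c), and let Φ(0) = 0, Φ(t) = t^p · (1 + c·sin(p·ln t)) for t > 0. Then the indices of the Orlicz function Φ satisfy p_Φ = q_Φ = p; that is, log M(t,Φ)/log t converges to p both as t → 0⁺ and as t → ∞. -/
/-! Since `|sin| ≤ 1` and `0 ≤ c < 1`, the function `Φ` is squeezed between `(1 - c) s^p` and
`(1 + c) s^p`. Hence every ratio `Φ(ts)/Φ(s)` lies within the constant factor
`K = (1 + c)/(1 - c)` of `t^p`, so `M(t, Φ) ∈ [t^p / K, K t^p]` and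
`log M(t, Φ) = p log t + O(1)`. Dividing by `log t`, whose absolute value tends to `∞` both as
`t → 0⁺` and as `t → ∞`, gives the limit `p` at both ends. -/

open MeasureTheory Filter Set
open scoped ENNReal Topology

theorem tendsto_mul_inv_of_abs_sub_mul_le {α : Type*} {l : Filter α} {f u : α → ℝ} {p C : ℝ}
    (hu : Tendsto (fun x => |u x|) l atTop) (hf : ∀ᶠ x in l, |f x - p * u x| ≤ C) :
    Tendsto (fun x => f x * (u x)⁻¹) l (𝓝 p) := by
  have hsmall : Tendsto (fun x => (f x - p * u x) * (u x)⁻¹) l (𝓝 0) := by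
    refine squeeze_zero_norm' ?_ (by simpa using (tendsto_inv_atTop_zero.comp hu).const_mul C)
    filter_upwards [hf] with x hx
    rw [Real.norm_eq_abs, abs_mul, abs_inv]
    exact mul_le_mul_of_nonneg_right hx (inv_nonneg.2 (abs_nonneg _))
  refine (by simpa using hsmall.const_add p : Tendsto _ l (𝓝 p)).congr' ?_
  filter_upwards [hu.eventually_gt_atTop 0] with x hx
  have hx : u x ≠ 0 := abs_pos.1 hx
  field_simp
  ring

def RpowComparable (Φ : ℝ → ℝ) (p A B : ℝ) : Prop :=
  ∀ s, 0 < s → Φ s ∈ Icc (A * s ^ p) (B * s ^ p)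

namespace RpowComparable

variable {Φ : ℝ → ℝ} {p A B t : ℝ}

theorem pos_right (hΦ : RpowComparable Φ p A B) (hA : 0 < A) : 0 < B := by
  have h := hΦ 1 one_pos
  simp only [Real.one_rpow, mul_one] at h
  exact hA.trans_le (h.1.trans h.2)

theorem ofReal_le_orliczM (hΦ : RpowComparable Φ p A B) (hA : 0 < A) (ht : 0 < t) :
    ENNReal.ofReal (A / B * t ^ p) ≤ orliczM Φ t := by
  have hB := hΦ.pos_right hA
  have htp := Real.rpow_pos_of_pos ht p
  have hΦ1 : Φ 1 ∈ Icc A B := by simpa using hΦ 1 one_pos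
  have hΦ1_pos : 0 < Φ 1 := hA.trans_le hΦ1.1
  refine le_iSup₂_of_le (1 : ℝ) ⟨one_pos, hΦ1_pos⟩ (ENNReal.ofReal_le_ofReal ?_)
  rw [mul_one, le_div_iff₀ hΦ1_pos]
  calc A / B * t ^ p * Φ 1 ≤ A / B * t ^ p * B := by gcongr; exact hΦ1.2
    _ = A * t ^ p := by field_simp
    _ ≤ Φ t := (hΦ t ht).1

theorem orliczM_le_ofReal (hΦ : RpowComparable Φ p A B) (hA : 0 < A) (ht : 0 < t) :
    orliczM Φ t ≤ ENNReal.ofReal (B / A * t ^ p) := by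
  have hB := hΦ.pos_right hA
  have htp := Real.rpow_pos_of_pos ht p
  refine iSup₂_le fun s ⟨hs, _⟩ => ENNReal.ofReal_le_ofReal ?_
  have hsp : 0 < A * s ^ p := mul_pos hA (Real.rpow_pos_of_pos hs p)
  rw [div_le_iff₀ (hsp.trans_le (hΦ s hs).1)]
  calc Φ (t * s) ≤ B * (t * s) ^ p := (hΦ _ (mul_pos ht hs)).2
    _ = B / A * t ^ p * (A * s ^ p) := by rw [Real.mul_rpow ht.le hs.le]; field_simp
    _ ≤ B / A * t ^ p * Φ s := by gcongr; exact (hΦ s hs).1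

theorem toReal_orliczM_mem_Icc (hΦ : RpowComparable Φ p A B) (hA : 0 < A) (ht : 0 < t) :
    (orliczM Φ t).toReal ∈ Icc (A / B * t ^ p) (B / A * t ^ p) := by
  have hB := hΦ.pos_right hA
  have htp := Real.rpow_pos_of_pos ht p
  have hle := hΦ.orliczM_le_ofReal hA ht
  have hM : orliczM Φ t ≠ ⊤ := ne_top_of_le_ne_top ENNReal.ofReal_ne_top hle
  exact ⟨(ENNReal.ofReal_le_iff_le_toReal hM).1 (hΦ.ofReal_le_orliczM hA ht),
    ENNReal.toReal_le_of_le_ofReal (by positivity) hle⟩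

theorem toReal_orliczM_pos (hΦ : RpowComparable Φ p A B) (hA : 0 < A) (ht : 0 < t) :
    0 < (orliczM Φ t).toReal := by
  have hB := hΦ.pos_right hA
  have htp := Real.rpow_pos_of_pos ht p
  exact lt_of_lt_of_le (by positivity) (hΦ.toReal_orliczM_mem_Icc hA ht).1

theorem abs_log_toReal_orliczM_sub_le (hΦ : RpowComparable Φ p A B) (hA : 0 < A) (ht : 0 < t) :
    |Real.log (orliczM Φ t).toReal - p * Real.log t| ≤ Real.log (B / A) := by
  have hB := hΦ.pos_right hA
  have htp := Real.rpow_pos_of_pos ht p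
  obtain ⟨hlo, hhi⟩ := hΦ.toReal_orliczM_mem_Icc hA ht
  have hlo := Real.log_le_log (by positivity) hlo
  have hhi := Real.log_le_log (hΦ.toReal_orliczM_pos hA ht) hhi
  rw [Real.log_mul (by positivity) htp.ne', Real.log_rpow ht] at hlo hhi
  rw [Real.log_div hA.ne' hB.ne'] at hlo
  rw [Real.log_div hB.ne' hA.ne'] at hhi ⊢
  rw [abs_le]
  constructor <;> linarith

theorem orliczLogRatio_eq_coe (hΦ : RpowComparable Φ p A B) (hA : 0 < A) (ht : 0 < t) :
    orliczLogRatio Φ t = ((Real.log (orliczM Φ t).toReal * (Real.log t)⁻¹ : ℝ) : EReal) := by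
  rw [orliczLogRatio, ENNReal.log_pos_real' (hΦ.toReal_orliczM_pos hA ht), EReal.coe_mul]

theorem tendsto_orliczLogRatio (hΦ : RpowComparable Φ p A B) (hA : 0 < A) {l : Filter ℝ}
    (hl : Tendsto (fun t => |Real.log t|) l atTop) (hl_pos : ∀ᶠ t in l, 0 < t) :
    Tendsto (orliczLogRatio Φ) l (𝓝 (p : EReal)) := by
  have h := tendsto_mul_inv_of_abs_sub_mul_le hl
    (hl_pos.mono fun t ht => hΦ.abs_log_toReal_orliczM_sub_le hA ht)
  refine (EReal.tendsto_coe.2 h).congr' ?_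
  filter_upwards [hl_pos] with t ht
  exact (hΦ.orliczLogRatio_eq_coe hA ht).symm

end RpowComparable

theorem rpowComparable_rpow_mul_one_add_sin {c : ℝ} (hc : 0 ≤ c) (p : ℝ) :
    RpowComparable (fun t : ℝ =>
      if t = 0 then 0 else t ^ p * (1 + c * Real.sin (p * Real.log t))) p (1 - c) (1 + c) := by
  intro s hs
  have hsp := Real.rpow_pos_of_pos hs p
  have h1 := mul_le_mul_of_nonneg_left (Real.neg_one_le_sin (p * Real.log s)) hc
  have h2 := mul_le_mul_of_nonneg_left (Real.sin_le_one (p * Real.log s)) hc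
  simp only [if_neg hs.ne']
  constructor <;> nlinarith

theorem orlicz_indices_rpow_mul_one_add_sin_general (c p : ℝ) (hc0 : 0 < c) (hc : c < 1 / 2) :
    Tendsto (orliczLogRatio (fun t : ℝ =>
        if t = 0 then 0 else t ^ p * (1 + c * Real.sin (p * Real.log t))))
        (𝓝[>] (0 : ℝ)) (𝓝 ((p : EReal))) ∧
      Tendsto (orliczLogRatio (fun t : ℝ =>
        if t = 0 then 0 else t ^ p * (1 + c * Real.sin (p * Real.log t))))
        atTop (𝓝 ((p : EReal))) := by
  have hΦ := rpowComparable_rpow_mul_one_add_sin hc0.le p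
  have hA : 0 < 1 - c := by linarith
  exact ⟨hΦ.tendsto_orliczLogRatio hA
      (tendsto_abs_atBot_atTop.comp Real.tendsto_log_nhdsGT_zero) self_mem_nhdsWithin,
    hΦ.tendsto_orliczLogRatio hA
      (tendsto_abs_atTop_atTop.comp Real.tendsto_log_atTop) (eventually_gt_atTop 0)⟩

/-- Example 4.7, second part: for `0 < c < 1/2` and `p > 1/(1 - 2c)`, the
Orlicz function `Φ(0) = 0`, `Φ(t) = t^p (1 + c sin(p ln t))` (`t > 0`) has indices
`p_Φ = q_Φ = p`. -/
theorem orlicz_indices_rpow_mul_one_add_sin (c p : ℝ) (hc0 : 0 < c) (hc : c < 1 / 2)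
    (hp : 1 / (1 - 2 * c) < p) :
    Tendsto (orliczLogRatio (fun t : ℝ =>
        if t = 0 then 0 else t ^ p * (1 + c * Real.sin (p * Real.log t))))
        (𝓝[>] (0 : ℝ)) (𝓝 ((p : EReal))) ∧
      Tendsto (orliczLogRatio (fun t : ℝ =>
        if t = 0 then 0 else t ^ p * (1 + c * Real.sin (p * Real.log t))))
        atTop (𝓝 ((p : EReal))) :=
  orlicz_indices_rpow_mul_one_add_sin_general c p hc0 hc
end

section
/- Operator lemma used in the proof of Theorem 3.5 (construction of the majorant): Let H be a complex Hilbert space, A a positive bounded linear operator on H, and p_1, …, p_N orthogonal projections on H that are pairwise orthogonal (p_i p_j = 0 for i ≠ j); set q = p_1 + ⋯ + p_N. Suppose c_1, …, c_N ≥ 0 satisfy p_k A p_k ≤ c_k p_k for each k, and let α_1, …, α_N > 0. Then q A q ≤ (Σ_{k=1}^N c_k/α_k) · (Σ_{k=1}^N α_k p_k) in the Loewner order; that is, ⟨q A q ξ, ξ⟩ ≤ (Σ_{k=1}^N c_k/α_k) · Σ_{k=1}^N α_k ‖p_k ξ‖² for all ξ ∈ H. -/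
/-!
With `B = √A`, `Re ⟪A x, x⟫ = ‖B x‖²`, so the triangle inequality gives
`‖B (q ξ)‖ ≤ ∑ₖ ‖B (pₖ ξ)‖`, and `pₖ A pₖ ≤ cₖ pₖ` gives `‖B (pₖ ξ)‖² ≤ (cₖ/αₖ) (αₖ ‖pₖ ξ‖²)`.
Cauchy–Schwarz in the form `rₖ² ≤ fₖ gₖ ⇒ (∑ rₖ)² ≤ (∑ fₖ) (∑ gₖ)` concludes.
-/

open ContinuousLinearMap

section
variable {𝕜 E : Type*} [RCLike 𝕜] [NormedAddCommGroup E] [InnerProductSpace 𝕜 E] [CompleteSpace E]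

lemma IsSelfAdjoint.inner_conj_apply_self {S : E →L[𝕜] E} (hS : IsSelfAdjoint S)
    (A : E →L[𝕜] E) (x : E) : inner 𝕜 ((S ∘L A ∘L S) x) x = inner 𝕜 (A (S x)) (S x) :=
  hS.isSymmetric _ _

lemma IsStarProjection.re_inner_apply_self {p : E →L[𝕜] E} (hp : IsStarProjection p) (x : E) :
    RCLike.re (inner 𝕜 (p x) x) = ‖p x‖ ^ 2 := by
  rw [apply_norm_sq_eq_inner_adjoint_left, hp.isSelfAdjoint.adjoint_eq]
  congr
  exact hp.isIdempotentElem.eq.symm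

lemma IsStarProjection.re_inner_apply_le_of_conj_le {p A : E →L[𝕜] E} (hp : IsStarProjection p)
    {c : ℝ} (hA : p ∘L A ∘L p ≤ (c : 𝕜) • p) (x : E) :
    RCLike.re (inner 𝕜 (A (p x)) (p x)) ≤ c * ‖p x‖ ^ 2 := by
  have h := hA.re_inner_nonneg_left x
  rw [sub_apply, inner_sub_left, map_sub, hp.isSelfAdjoint.inner_conj_apply_self,
    smul_apply, inner_smul_left, RCLike.conj_ofReal, RCLike.re_ofReal_mul,
    hp.re_inner_apply_self] at h
  linarith

end

lemma ContinuousLinearMap.IsPositive.re_inner_apply_self_eq_norm_sqrt_apply_sq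
    {H : Type*} [NormedAddCommGroup H] [InnerProductSpace ℂ H] [CompleteSpace H] {A : H →L[ℂ] H} (hA : A.IsPositive) (x : H) :
    RCLike.re (inner ℂ (A x) x) = ‖CFC.sqrt A x‖ ^ 2 := by
  have hB : IsSelfAdjoint (CFC.sqrt A) := (CFC.sqrt_nonneg A).isSelfAdjoint
  rw [apply_norm_sq_eq_inner_adjoint_left, hB.adjoint_eq]
  congr
  exact (CFC.sqrt_mul_sqrt_self A ((nonneg_iff_isPositive A).2 hA)).symm

theorem proj_sum_positive_majorant_general
    {H : Type*} [NormedAddCommGroup H] [InnerProductSpace ℂ H] [CompleteSpace H]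
    (N : ℕ) (A : H →L[ℂ] H) (hA : A.IsPositive)
    (p : Fin N → (H →L[ℂ] H))
    (hp_sa : ∀ k, IsSelfAdjoint (p k)) (hp_idem : ∀ k, p k ∘L p k = p k)
    (q : H →L[ℂ] H) (hq : q = ∑ k, p k)
    (c : Fin N → ℝ) (hc : ∀ k, 0 ≤ c k)
    (hcA : ∀ k, (((c k : ℂ) • p k) - (p k ∘L A ∘L p k)).IsPositive)
    (α : Fin N → ℝ) (hα : ∀ k, 0 < α k) :
    ∀ ξ : H, (inner ℂ ((q ∘L A ∘L q) ξ) ξ : ℂ).re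
      ≤ (∑ k, c k / α k) * ∑ k, α k * ‖p k ξ‖ ^ 2 := by
  intro ξ
  have hq_sa : IsSelfAdjoint q := hq ▸ isSelfAdjoint_sum _ fun k _ => hp_sa k
  have hA_p : ∀ k, ‖CFC.sqrt A (p k ξ)‖ ^ 2 ≤ c k / α k * (α k * ‖p k ξ‖ ^ 2) := fun k => by
    rw [← hA.re_inner_apply_self_eq_norm_sqrt_apply_sq, ← mul_assoc, div_mul_cancel₀ _ (hα k).ne']
    exact IsStarProjection.re_inner_apply_le_of_conj_le ⟨hp_idem k, hp_sa k⟩ (hcA k) ξ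
  calc (inner ℂ ((q ∘L A ∘L q) ξ) ξ).re = ‖∑ k, CFC.sqrt A (p k ξ)‖ ^ 2 := by
        rw [hq_sa.inner_conj_apply_self, ← RCLike.re_to_complex,
          hA.re_inner_apply_self_eq_norm_sqrt_apply_sq, hq, sum_apply, map_sum]
    _ ≤ (∑ k, ‖CFC.sqrt A (p k ξ)‖) ^ 2 := by gcongr; exact norm_sum_le _ _
    _ ≤ _ := Finset.sum_sq_le_sum_mul_sum_of_sq_le_mul _
        (fun k _ => div_nonneg (hc k) (hα k).le) (fun k _ => mul_nonneg (hα k).le (sq_nonneg _))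
        (fun k _ => hA_p k)

/-- majorant construction. If `A ≥ 0`, `p₁, …, p_N` are pairwise orthogonal
projections with `q = p₁ + ⋯ + p_N`, `p_k A p_k ≤ c_k p_k` and `α_k > 0`, then
`⟨qAq ξ, ξ⟩ ≤ (Σ c_k/α_k) Σ α_k ‖p_k ξ‖²` for every `ξ`. -/
theorem proj_sum_positive_majorant
    {H : Type*} [NormedAddCommGroup H] [InnerProductSpace ℂ H] [CompleteSpace H]
    (N : ℕ) (A : H →L[ℂ] H) (hA : A.IsPositive)
    (p : Fin N → (H →L[ℂ] H))
    (hp_sa : ∀ k, IsSelfAdjoint (p k)) (hp_idem : ∀ k, p k ∘L p k = p k)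
    (hp_orth : ∀ i j, i ≠ j → p i ∘L p j = 0)
    (q : H →L[ℂ] H) (hq : q = ∑ k, p k)
    (c : Fin N → ℝ) (hc : ∀ k, 0 ≤ c k)
    (hcA : ∀ k, (((c k : ℂ) • p k) - (p k ∘L A ∘L p k)).IsPositive)
    (α : Fin N → ℝ) (hα : ∀ k, 0 < α k) :
    ∀ ξ : H, (inner ℂ ((q ∘L A ∘L q) ξ) ξ : ℂ).re
      ≤ (∑ k, c k / α k) * ∑ k, α k * ‖p k ξ‖ ^ 2 :=
  proj_sum_positive_majorant_general N A hA p hp_sa hp_idem q hq c hc hcA α hα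
end
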